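/- arXiv:1708.04228 — 2 statements merged into one kernel-verified Lean document; each statement's English description precedes it below -/
import Mathlib

section
/- Let λ ⊆ ν and μ be partitions and let T be an edge-labeled tableau of shape ν/λ and content μ. If the column reading word w_c(T) is lattice, then the row reading word w_r(T) is lattice. -/
/-!
Common definitions: partitions, edge-labeled tableaux (Thomas–Yong), reading
words, the polytope conditions (A)–(F), plus diagrams and (factorial) Schur
polynomials, following Adve–Robichaux–Yong,
"Vanishing of Littlewood-Richardson polynomials is in P".
-/

/-- A partition: a weakly decreasing, eventually-zero sequence of natural numbers.
Internally `toFun` is 0-indexed: `toFun (i-1)` is the `i`-th part `λ_i`. -/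
structure SeqPartition where
  toFun : ℕ → ℕ
  antitone' : ∀ ⦃i j : ℕ⦄, i ≤ j → toFun j ≤ toFun i
  eventually_zero' : ∃ N, ∀ i, N ≤ i → toFun i = 0

namespace SeqPartition

/-- The `i`-th part `λ_i` (1-indexed: `part 1` is the first part). -/
def part (p : SeqPartition) (i : ℕ) : ℕ := p.toFun (i - 1)

/-- `ℓ(λ)`: the number of nonzero parts. -/
noncomputable def len (p : SeqPartition) : ℕ := Set.ncard {i : ℕ | p.toFun i ≠ 0}

/-- `|λ| = Σ_i λ_i`. -/
noncomputable def size (p : SeqPartition) : ℕ := ∑ᶠ i, p.toFun i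

/-- The dilated partition `Nλ = (Nλ_1, Nλ_2, …)`. -/
def smul (N : ℕ) (p : SeqPartition) : SeqPartition where
  toFun i := N * p.toFun i
  antitone' _ _ h := Nat.mul_le_mul le_rfl (p.antitone' h)
  eventually_zero' := by
    obtain ⟨M, hM⟩ := p.eventually_zero'
    exact ⟨M, fun i hi => by rw [hM i hi, Nat.mul_zero]⟩

/-- `λ ⊆ ν`, i.e. `λ_i ≤ ν_i` for all `i`. -/
def Subset (lam nu : SeqPartition) : Prop := ∀ i, lam.part i ≤ nu.part i

end SeqPartition

/-- `(i,j)` (1-indexed, matrix convention) is a box of the skew shape `ν/λ`,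
i.e. `λ_i < j ≤ ν_i`. -/
def IsBox (lam nu : SeqPartition) (i j : ℕ) : Prop :=
  1 ≤ i ∧ lam.part i < j ∧ j ≤ nu.part i

instance (lam nu : SeqPartition) (i j : ℕ) : Decidable (IsBox lam nu i j) :=
  inferInstanceAs (Decidable (_ ∧ _ ∧ _))

/-- `(i+1/2, j)` is a horizontal edge position of the skew shape `ν/λ`:
`1 ≤ j ≤ ν_i` and `j > λ_{i+1}`. -/
def IsEdge (lam nu : SeqPartition) (i j : ℕ) : Prop :=
  1 ≤ i ∧ 1 ≤ j ∧ j ≤ nu.part i ∧ lam.part (i + 1) < j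

/-- An edge-labeled tableau of shape `ν/λ` and content `μ` (Thomas–Yong).
`box i j` is the label of box `(i,j)` (`0` outside the shape), and
`edge i j` is the finite set of labels on the edge `(i+1/2, j)`
(empty outside the shape). All labels are positive integers. -/
structure EdgeTableau (lam mu nu : SeqPartition) where
  subset : SeqPartition.Subset lam nu
  box : ℕ → ℕ → ℕ
  edge : ℕ → ℕ → Finset ℕ
  box_pos : ∀ i j, IsBox lam nu i j → 1 ≤ box i j
  box_eq_zero : ∀ i j, ¬ IsBox lam nu i j → box i j = 0
  edge_pos : ∀ i j, ∀ e ∈ edge i j, 1 ≤ e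
  edge_eq_empty : ∀ i j, ¬ IsEdge lam nu i j → edge i j = ∅
  row_weak : ∀ i j, IsBox lam nu i j → IsBox lam nu i (j+1) → box i j ≤ box i (j+1)
  col_strict : ∀ i j, IsBox lam nu i j → IsBox lam nu (i+1) j → box i j < box (i+1) j
  edge_gt_box : ∀ i j, IsBox lam nu i j → ∀ e ∈ edge i j, box i j < e
  edge_lt_box : ∀ i j, IsBox lam nu (i+1) j → ∀ e ∈ edge i j, e < box (i+1) j
  not_too_high : ∀ i j, ∀ e ∈ edge i j, e ≤ i
  content : ∀ k, 1 ≤ k →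
    Set.ncard {q : ℕ × ℕ | box q.1 q.2 = k} + Set.ncard {q : ℕ × ℕ | k ∈ edge q.1 q.2}
      = mu.part k

namespace EdgeTableau

variable {lam mu nu : SeqPartition}

/-- The (one-letter or empty) word contributed by the box `(i,j)`. -/
def boxWord (T : EdgeTableau lam mu nu) (i j : ℕ) : List ℕ :=
  if IsBox lam nu i j then [T.box i j] else []

/-- The word contributed by the edge `(i+1/2, j)`, read in increasing order. -/
def edgeWord (T : EdgeTableau lam mu nu) (i j : ℕ) : List ℕ :=
  (T.edge i j).sort (· ≤ ·)

/-- The column reading word `w_c(T)`: columns right to left, each column top to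
bottom, alternating the box label of row `i` with the edge set of row `i+1/2`. -/
noncomputable def wc (T : EdgeTableau lam mu nu) : List ℕ :=
  ((List.range (nu.part 1)).reverse).flatMap fun j0 =>
    (List.range nu.len).flatMap fun i0 =>
      T.boxWord (i0+1) (j0+1) ++ T.edgeWord (i0+1) (j0+1)

/-- The row reading word `w_r(T)`: for `i = 1, 2, …`, the boxes of row `i`
right to left, then the edge sets of row `i+1/2` right to left. -/
noncomputable def wr (T : EdgeTableau lam mu nu) : List ℕ :=
  (List.range nu.len).flatMap fun i0 =>
    (((List.range (nu.part 1)).reverse).flatMap fun j0 => T.boxWord (i0+1) (j0+1)) ++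
    (((List.range (nu.part 1)).reverse).flatMap fun j0 => T.edgeWord (i0+1) (j0+1))

end EdgeTableau

/-- A word is lattice if, for every `k ≥ 1`, every prefix contains at least as
many letters `k` as letters `k+1`. -/
def IsLatticeWord (w : List ℕ) : Prop :=
  ∀ k, 1 ≤ k → ∀ t, (w.take t).count (k+1) ≤ (w.take t).count k

/-- `EdgeTab(λ,μ,ν)`: edge-labeled tableaux of shape `ν/λ` and content `μ`
whose column reading word is lattice. -/
def EdgeTab (lam mu nu : SeqPartition) : Set (EdgeTableau lam mu nu) :=
  {T | IsLatticeWord T.wc}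

/-! ### Positions and reading-order prefixes -/

/-- A (horizontal) position of a tableau: a box `(i,j)` or an edge `(i+1/2, j)`. -/
inductive HPos
  | box (i j : ℕ)
  | edge (i j : ℕ)

namespace HPos

/-- Twice the (half-integer) row index: `2i` for a box in row `i`,
`2i+1` for an edge in row `i+1/2`. -/
def rowIdx : HPos → ℕ
  | .box i _ => 2 * i
  | .edge i _ => 2 * i + 1

/-- The column of a position. -/
def col : HPos → ℕ
  | .box _ j => j
  | .edge _ j => j

/-- `p` is weakly northeast of `q`: weakly above and weakly to the right. -/
def NorthEastOf (p q : HPos) : Prop := p.rowIdx ≤ q.rowIdx ∧ q.col ≤ p.col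

/-- `p` is read no later than `q` in the column reading order (columns right to
left, each column top to bottom); equivalently, every label at `p` is read by
the prefix `w_c|_q` of the column reading word ending after position `q`. -/
def colLE (p q : HPos) : Prop := q.col < p.col ∨ (p.col = q.col ∧ p.rowIdx ≤ q.rowIdx)

/-- `p` is read no later than `q` in the row reading order (rows top to bottom,
each row right to left); equivalently, every label at `p` is read by the
prefix `w_r|_q` of the row reading word ending after position `q`. -/
def rowLE (p q : HPos) : Prop := p.rowIdx < q.rowIdx ∨ (p.rowIdx = q.rowIdx ∧ q.col ≤ p.col)

end HPos

/-- `p` is a valid (box or edge) position of the skew shape `ν/λ`. -/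
def IsPos (lam nu : SeqPartition) : HPos → Prop
  | .box i j => IsBox lam nu i j
  | .edge i j => IsEdge lam nu i j

/-- The tableau `T` carries the label `ℓ` at the position `p`. -/
def EdgeTableau.HasLabel {lam mu nu : SeqPartition} (T : EdgeTableau lam mu nu) :
    HPos → ℕ → Prop
  | .box i j, ℓ => IsBox lam nu i j ∧ T.box i j = ℓ
  | .edge i j, ℓ => ℓ ∈ T.edge i j

/-! ### The statistics `r_k^i(T)`, `r_k^{i+1/2}(T)` and conditions (A)–(F) -/

/-- `r_k^i(T)`: the number of box labels `k` in row `i` of `T`. -/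
noncomputable def EdgeTableau.rbox {lam mu nu : SeqPartition} (T : EdgeTableau lam mu nu)
    (k i : ℕ) : ℕ :=
  Set.ncard {j : ℕ | IsBox lam nu i j ∧ T.box i j = k}

/-- `r_k^{i+1/2}(T)`: the number of edge labels `k` on the edges `(i+1/2, j)` of `T`. -/
noncomputable def EdgeTableau.redge {lam mu nu : SeqPartition} (T : EdgeTableau lam mu nu)
    (k i : ℕ) : ℕ :=
  Set.ncard {j : ℕ | k ∈ T.edge i j}

open Finset in
/-- Conditions (A)–(F) of Adve–Robichaux–Yong for the triple `(λ,μ,ν)` on the real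
tuple `(r_k^i, r_k^{i+1/2})_{1 ≤ k ≤ ℓ(μ), 1 ≤ i ≤ ℓ(ν)}`, encoded as a pair of
functions `rb re : ℕ → ℕ → ℝ` (`rb k i = r_k^i`, `re k i = r_k^{i+1/2}`) that
vanish outside the index range (which also encodes the paper's conventions
`r_{ℓ(μ)+1}^i = r_{ℓ(μ)+1}^{i+1/2} = 0` and `r_k^{ℓ(ν)+1} = 0`).
Membership in the polytope `P(λ,μ,ν)` is exactly this predicate. -/
def SatisfiesAF (lam mu nu : SeqPartition) (rb re : ℕ → ℕ → ℝ) : Prop :=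
  -- the tuple is indexed by `1 ≤ k ≤ ℓ(μ)`, `1 ≤ i ≤ ℓ(ν)`; it vanishes elsewhere
  (∀ k i, ¬(1 ≤ k ∧ k ≤ mu.len ∧ 1 ≤ i ∧ i ≤ nu.len) → rb k i = 0 ∧ re k i = 0) ∧
  -- (A) nonnegativity
  (∀ k i, 0 ≤ rb k i ∧ 0 ≤ re k i) ∧
  -- (B) shape constraints
  (∀ i, 1 ≤ i → (lam.part i : ℝ) + ∑ k ∈ Icc 1 mu.len, rb k i = (nu.part i : ℝ)) ∧
  -- (C) content constraints
  (∀ k, 1 ≤ k → ∑ i ∈ Icc 1 nu.len, (rb k i + re k i) = (mu.part k : ℝ)) ∧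
  -- (D) gap constraints
  (∀ k i, 1 ≤ k → k ≤ mu.len → 1 ≤ i → i ≤ nu.len →
    re k i ≤ ((lam.part i : ℝ) + ∑ k' ∈ Ico 1 k, rb k' i)
      - ((lam.part (i+1) : ℝ) + ∑ k' ∈ Icc 1 k, rb k' (i+1))) ∧
  -- (E) no label is too high
  (∀ k i, i < k → rb k i = 0 ∧ re k i = 0) ∧
  -- (F) reverse lattice word constraints
  (∀ k i, 1 ≤ k → k ≤ mu.len → 1 ≤ i → i ≤ nu.len →
    rb (k+1) i + ∑ i' ∈ Ico 1 i, (rb (k+1) i' + re (k+1) i')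
      ≤ ∑ i' ∈ Ico 1 i, (rb k i' + re k i'))

/-! ### Plus diagrams and (factorial) Schur polynomials -/

/-- The initial diagram of `λ` in the `n`-row grid: a `+` in each position
`(i,j)` with `1 ≤ i ≤ n`, `1 ≤ j ≤ λ_i`. -/
def initialDiagram (n : ℕ) (lam : SeqPartition) : Finset (ℕ × ℕ) :=
  (Finset.Icc 1 n ×ˢ Finset.Icc 1 (lam.part 1)).filter fun q => q.2 ≤ lam.part q.1

/-- A local move in the `n × m` grid: a `+` at `(i,j)` moves to `(i+1,j+1)`,
provided `(i+1,j+1)` lies in the grid and `(i,j+1)`, `(i+1,j)`, `(i+1,j+1)`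
carry no `+`. -/
def IsLocalMove (n m : ℕ) (P Q : Finset (ℕ × ℕ)) : Prop :=
  ∃ i j, (i, j) ∈ P ∧ i + 1 ≤ n ∧ j + 1 ≤ m ∧
    (i, j+1) ∉ P ∧ (i+1, j) ∉ P ∧ (i+1, j+1) ∉ P ∧
    Q = insert (i+1, j+1) (P.erase (i, j))

/-- `Plus(λ)`: all configurations obtainable from the initial diagram of `λ`
in the `n × m` grid by finite sequences of local moves. -/
def PlusSet (n m : ℕ) (lam : SeqPartition) : Set (Finset (ℕ × ℕ)) :=
  {P | Relation.ReflTransGen (IsLocalMove n m) (initialDiagram n lam) P}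

open MvPolynomial in
/-- `wt_{x,y}(P) = ∏_{(i,j) ∈ P} (x_i - y_j)`, in `ℤ[x_1, x_2, …, y_1, y_2, …]`
(the variable `Sum.inl i` is `x_i`, and `Sum.inr j` is `y_j`). -/
noncomputable def wtxy (P : Finset (ℕ × ℕ)) : MvPolynomial (ℕ ⊕ ℕ) ℤ :=
  ∏ q ∈ P, (X (Sum.inl q.1) - X (Sum.inr q.2))

open MvPolynomial in
/-- `wt_x(P) = ∏_i x_i^{a_i(P)}`, where `a_i(P)` is the number of `+`'s in row `i`. -/
noncomputable def wtx (P : Finset (ℕ × ℕ)) : MvPolynomial (ℕ ⊕ ℕ) ℤ :=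
  ∏ q ∈ P, X (Sum.inl q.1)

/-- The factorial Schur polynomial `s_λ(X;Y) = Σ_{P ∈ Plus(λ)} wt_{x,y}(P)`
(computed in the `n × m` grid). -/
noncomputable def factorialSchur (n m : ℕ) (lam : SeqPartition) : MvPolynomial (ℕ ⊕ ℕ) ℤ :=
  ∑ᶠ P ∈ PlusSet n m lam, wtxy P

/-- The Schur polynomial `s_λ(X) = Σ_{P ∈ Plus(λ)} wt_x(P)`
(computed in the `n × m` grid). -/
noncomputable def schurPoly (n m : ℕ) (lam : SeqPartition) : MvPolynomial (ℕ ⊕ ℕ) ℤ :=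
  ∑ᶠ P ∈ PlusSet n m lam, wtx P

open MvPolynomial in
/-- The substitution `y_j = 0` for all `j` (keeping the `x`-variables). -/
noncomputable def setYtoZero : MvPolynomial (ℕ ⊕ ℕ) ℤ →+* MvPolynomial (ℕ ⊕ ℕ) ℤ :=
  (aeval (Sum.elim (fun i => (X (Sum.inl i) : MvPolynomial (ℕ ⊕ ℕ) ℤ)) fun _ => 0)).toRingHom

open MvPolynomial in
/-- Interpret a polynomial in `ℤ[y_1, y_2, …]` inside `ℤ[x_1, …, y_1, …]`. -/
noncomputable def yPoly (p : MvPolynomial ℕ ℤ) : MvPolynomial (ℕ ⊕ ℕ) ℤ :=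
  rename Sum.inr p

namespace LatticeAux

open EdgeTableau

lemma part_antitone (p : SeqPartition) {i j : ℕ} (hij : i ≤ j) : p.part j ≤ p.part i :=
  p.antitone' (Nat.sub_le_sub_right hij 1)

lemma le_len_of_part_pos (p : SeqPartition) {i : ℕ} (hi : 1 ≤ p.part i) : i ≤ p.len := by
  obtain ⟨N, hN⟩ := p.eventually_zero'
  have hp : 1 ≤ p.toFun (i-1) := hi
  have hsub : (↑(Finset.range i) : Set ℕ) ⊆ {m : ℕ | p.toFun m ≠ 0} := by
    intro a ha
    simp only [Finset.coe_range, Set.mem_Iio] at ha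
    have h2 : p.toFun (i - 1) ≤ p.toFun a := p.antitone' (by omega)
    simp only [Set.mem_setOf_eq]
    omega
  have hfin : {m : ℕ | p.toFun m ≠ 0}.Finite := by
    apply Set.Finite.subset (Set.finite_Iio N)
    intro a ha
    simp only [Set.mem_setOf_eq] at ha
    simp only [Set.mem_Iio]
    by_contra hc
    exact ha (hN a (by omega))
  have hcard := Set.ncard_le_ncard hsub hfin
  rw [Set.ncard_coe_finset, Finset.card_range] at hcard
  exact le_trans hcard le_rfl

variable {lam mu nu : SeqPartition} (T : EdgeTableau lam mu nu)

lemma isBox_of_between {i c c' c'' : ℕ} (h : IsBox lam nu i c) (h' : IsBox lam nu i c')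
    (h1 : c ≤ c'') (h2 : c'' ≤ c') : IsBox lam nu i c'' := by
  obtain ⟨hi, hl, hr⟩ := h; obtain ⟨_, hl', hr'⟩ := h'
  exact ⟨hi, by omega, by omega⟩

lemma rowMono {i c c' : ℕ} (h : IsBox lam nu i c) (h' : IsBox lam nu i c') (hcc : c ≤ c') :
    T.box i c ≤ T.box i c' := by
  obtain ⟨d, rfl⟩ := Nat.exists_eq_add_of_le hcc
  clear hcc
  induction d with
  | zero => exact le_rfl
  | succ d ih =>
    have hmid : IsBox lam nu i (c + d) := isBox_of_between h h' (by omega) (by omega)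
    have hmid' : IsBox lam nu i (c + d + 1) := isBox_of_between h h' (by omega) (by omega)
    calc T.box i c ≤ T.box i (c+d) := ih hmid
      _ ≤ T.box i (c+d+1) := T.row_weak i (c+d) hmid hmid'
    
lemma isBox_of_between_col {i i' i'' c : ℕ} (h : IsBox lam nu i c) (h' : IsBox lam nu i' c)
    (h1 : i ≤ i'') (h2 : i'' ≤ i') : IsBox lam nu i'' c := by
  obtain ⟨hi, hl, hr⟩ := h; obtain ⟨hi', hl', hr'⟩ := h'
  refine ⟨by omega, ?_, ?_⟩
  · exact lt_of_le_of_lt (part_antitone lam h1) hl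
  · exact le_trans hr' (part_antitone nu h2)

lemma colMono {i i' c : ℕ} (h : IsBox lam nu i c) (h' : IsBox lam nu i' c) (hii : i ≤ i') :
    T.box i c ≤ T.box i' c := by
  obtain ⟨d, rfl⟩ := Nat.exists_eq_add_of_le hii
  clear hii
  induction d with
  | zero => exact le_rfl
  | succ d ih =>
    have hmid : IsBox lam nu (i + d) c := isBox_of_between_col h h' (by omega) (by omega)
    have hmid' : IsBox lam nu (i + d + 1) c := isBox_of_between_col h h' (by omega) (by omega)
    calc T.box i c ≤ T.box (i+d) c := ih hmid
      _ ≤ T.box (i+d+1) c := le_of_lt (T.col_strict (i+d) c hmid hmid')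

lemma colStrict {i i' c : ℕ} (h : IsBox lam nu i c) (h' : IsBox lam nu i' c) (hii : i < i') :
    T.box i c < T.box i' c := by
  have hmid : IsBox lam nu (i+1) c := isBox_of_between_col h h' (by omega) (by omega)
  exact lt_of_lt_of_le (T.col_strict i c h hmid) (colMono T hmid h' hii)

/-- `T` has label `v` at box `(i,j)` (if `p = false`) or at edge `(i+1/2, j)` (if `p = true`). -/
def HasAt (v i j : ℕ) (p : Bool) : Prop :=
  if p then v ∈ T.edge i j else (IsBox lam nu i j ∧ T.box i j = v)

lemma isEdge_of_mem {v i j : ℕ} (h : v ∈ T.edge i j) : IsEdge lam nu i j := by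
  by_contra hc
  rw [T.edge_eq_empty i j hc] at h
  exact absurd h (Finset.notMem_empty v)

/-- The key geometric lemma: a label strictly southeast of another is strictly larger. -/
lemma label_lt_label {v v' i j i' j' : ℕ} {p p' : Bool}
    (hv : HasAt T v i j p) (hv' : HasAt T v' i' j' p')
    (hj : j < j') (hr : 2*i + p.toNat < 2*i' + p'.toNat) : v < v' := by
  cases p <;> cases p' <;>
    simp only [HasAt, if_true, if_false, Bool.toNat_false, Bool.toNat_true] at hv hv' hr ⊢
  · -- box, box
    obtain ⟨hb, rfl⟩ := hv; obtain ⟨hb', rfl⟩ := hv'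
    have hii : i < i' := by omega
    have hbox : IsBox lam nu i j' := by
      obtain ⟨hi1, hl, hrr⟩ := hb; obtain ⟨hi1', hl', hrr'⟩ := hb'
      exact ⟨hi1, by omega, le_trans hrr' (part_antitone nu (by omega))⟩
    exact lt_of_le_of_lt (rowMono T hb hbox hj.le) (colStrict T hbox hb' hii)
  · -- box, edge
    obtain ⟨hb, rfl⟩ := hv
    have hii : i ≤ i' := by omega
    have he' := isEdge_of_mem T hv'
    have hi1 := hb.1; have hl := hb.2.1; have hrr := hb.2.2
    obtain ⟨hi1', hj1', hjn', hjl'⟩ := he'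
    have hb' : IsBox lam nu i' j' := by
      refine ⟨hi1', ?_, hjn'⟩
      have : lam.part i' ≤ lam.part i := part_antitone lam hii
      omega
    have hbox : IsBox lam nu i j' :=
      ⟨hi1, by omega, le_trans hjn' (part_antitone nu hii)⟩
    calc T.box i j ≤ T.box i j' := rowMono T hb hbox hj.le
      _ ≤ T.box i' j' := colMono T hbox hb' hii
      _ < v' := T.edge_gt_box i' j' hb' v' hv'
  · -- edge, box
    obtain ⟨hb', rfl⟩ := hv'
    have hii : i + 1 ≤ i' := by omega
    have he := isEdge_of_mem T hv
    obtain ⟨hi1, hj1, hjn, hjl⟩ := he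
    have hi1' := hb'.1; have hl' := hb'.2.1; have hrr' := hb'.2.2
    have hb1 : IsBox lam nu (i+1) j := by
      refine ⟨by omega, hjl, ?_⟩
      calc j ≤ j' := hj.le
        _ ≤ nu.part i' := hrr'
        _ ≤ nu.part (i+1) := part_antitone nu hii
    have hb2 : IsBox lam nu (i+1) j' :=
      ⟨by omega, by omega, le_trans hrr' (part_antitone nu hii)⟩
    calc v < T.box (i+1) j := T.edge_lt_box i j hb1 v hv
      _ ≤ T.box (i+1) j' := rowMono T hb1 hb2 hj.le
      _ ≤ T.box i' j' := colMono T hb2 hb' hii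
  · -- edge, edge
    have hii : i + 1 ≤ i' := by omega
    have he := isEdge_of_mem T hv
    have he' := isEdge_of_mem T hv'
    obtain ⟨hi1, hj1, hjn, hjl⟩ := he
    obtain ⟨hi1', hj1', hjn', hjl'⟩ := he'
    have hb1 : IsBox lam nu (i+1) j := by
      refine ⟨by omega, hjl, ?_⟩
      calc j ≤ j' := hj.le
        _ ≤ nu.part i' := hjn'
        _ ≤ nu.part (i+1) := part_antitone nu hii
    have hb2 : IsBox lam nu (i+1) j' :=
      ⟨by omega, by omega, le_trans hjn' (part_antitone nu hii)⟩
    have hb' : IsBox lam nu i' j' := by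
      refine ⟨hi1', ?_, hjn'⟩
      have : lam.part i' ≤ lam.part (i+1) := part_antitone lam hii
      omega
    calc v < T.box (i+1) j := T.edge_lt_box i j hb1 v hv
      _ ≤ T.box (i+1) j' := rowMono T hb1 hb2 hj.le
      _ ≤ T.box i' j' := colMono T hb2 hb' hii
      _ < v' := T.edge_gt_box i' j' hb' v' hv'

/-! ### Occurrence indicators and counting lemmas -/

/-- Indicator: box `(i,j)` exists and carries label `v`. -/
def occB (v i j : ℕ) : ℕ := if IsBox lam nu i j ∧ T.box i j = v then 1 else 0

/-- Indicator: the edge `(i+1/2,j)` carries label `v`. -/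
def occE (v i j : ℕ) : ℕ := if v ∈ T.edge i j then 1 else 0

lemma hasAt_of_occB {v i j : ℕ} (h : occB T v i j ≠ 0) : HasAt T v i j false := by
  by_cases hc : IsBox lam nu i j ∧ T.box i j = v
  · simpa [HasAt] using hc
  · exact absurd (by simp [occB, hc]) h

lemma hasAt_of_occE {v i j : ℕ} (h : occE T v i j ≠ 0) : HasAt T v i j true := by
  by_cases hc : v ∈ T.edge i j
  · simpa [HasAt] using hc
  · exact absurd (by simp [occE, hc]) h

lemma occB_nw {v w i j i0 j0 : ℕ} {p0 : Bool} (hw : HasAt T w i0 j0 p0) (hvw : w ≤ v)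
    (hj : j < j0) (hr : 2*i < 2*i0 + p0.toNat) : occB T v i j = 0 := by
  by_contra hc
  have := label_lt_label T (hasAt_of_occB T hc) hw hj (by simpa [Bool.toNat] using hr)
  omega

lemma occE_nw {v w i j i0 j0 : ℕ} {p0 : Bool} (hw : HasAt T w i0 j0 p0) (hvw : w ≤ v)
    (hj : j < j0) (hr : 2*i + 1 < 2*i0 + p0.toNat) : occE T v i j = 0 := by
  by_contra hc
  have := label_lt_label T (hasAt_of_occE T hc) hw hj (by simpa [Bool.toNat] using hr)
  omega

lemma occB_se {v w i j i0 j0 : ℕ} {p0 : Bool} (hw : HasAt T w i0 j0 p0) (hvw : v ≤ w)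
    (hj : j0 < j) (hr : 2*i0 + p0.toNat < 2*i) : occB T v i j = 0 := by
  by_contra hc
  have := label_lt_label T hw (hasAt_of_occB T hc) hj (by simpa [Bool.toNat] using hr)
  omega

lemma occE_se {v w i j i0 j0 : ℕ} {p0 : Bool} (hw : HasAt T w i0 j0 p0) (hvw : v ≤ w)
    (hj : j0 < j) (hr : 2*i0 + p0.toNat < 2*i + 1) : occE T v i j = 0 := by
  by_contra hc
  have := label_lt_label T hw (hasAt_of_occE T hc) hj (by simpa [Bool.toNat] using hr)
  omega

lemma count_boxWord (v i j : ℕ) : (T.boxWord i j).count v = occB T v i j := by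
  unfold EdgeTableau.boxWord occB
  by_cases hb : IsBox lam nu i j
  · simp only [hb, if_true, true_and]
    by_cases hv : T.box i j = v
    · simp [hv]
    · simp [hv, List.count_cons]
  · simp [hb]

lemma count_edgeWord (v i j : ℕ) : (T.edgeWord i j).count v = occE T v i j := by
  unfold EdgeTableau.edgeWord occE
  by_cases hv : v ∈ T.edge i j
  · rw [if_pos hv]
    exact List.count_eq_one_of_mem (Finset.sort_nodup _ _) (by simpa using hv)
  · rw [if_neg hv]
    exact List.count_eq_zero_of_not_mem (by simpa using hv)

/-! ### List manipulation lemmas -/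

lemma sum_map_range (n : ℕ) (f : ℕ → ℕ) :
    ((List.range n).map f).sum = ∑ b ∈ Finset.range n, f b := by
  induction n with
  | zero => simp
  | succ n ih => rw [List.range_succ, Finset.sum_range_succ]; simp [ih]

lemma count_flatMap_range (n : ℕ) (f : ℕ → List ℕ) (v : ℕ) :
    ((List.range n).flatMap f).count v = ∑ b ∈ Finset.range n, (f b).count v := by
  rw [List.count_flatMap, sum_map_range]
  simp [Function.comp]

lemma count_flatMap_rev {α : Type*} (l : List α) (f : α → List ℕ) (v : ℕ) :
    (l.reverse.flatMap f).count v = (l.flatMap f).count v := by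
  rw [List.count_flatMap, List.count_flatMap, List.map_reverse, List.sum_reverse]

lemma count_flatMap_shift (x s : ℕ) (f : ℕ → List ℕ) (v : ℕ) :
    (((List.range s).map (fun t => x + t)).flatMap f).count v
      = ∑ t ∈ Finset.range s, (f (x + t)).count v := by
  rw [List.count_flatMap, List.map_map, sum_map_range]
  simp [Function.comp]

/-- Splitting a `flatMap` at an occurrence of a letter. -/
lemma flatMap_split {α : Type*} (l : List α) (f : α → List ℕ) :
    ∀ {u v : List ℕ} {a : ℕ}, l.flatMap f = u ++ a :: v →
    ∃ l1 x l2 u2 v2, l = l1 ++ x :: l2 ∧ f x = u2 ++ a :: v2 ∧ u = l1.flatMap f ++ u2 := by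
  induction l with
  | nil =>
    intro u v a h
    simp only [List.flatMap_nil] at h
    exact absurd h.symm (List.append_ne_nil_of_right_ne_nil u (by simp))
  | cons y l' ih =>
    intro u v a h
    rw [List.flatMap_cons] at h
    rcases List.append_eq_append_iff.mp h with ⟨w, hw1, hw2⟩ | ⟨w, hw1, hw2⟩
    · -- u = f y ++ w, l'.flatMap f = w ++ a :: v
      obtain ⟨l1, x, l2, u2, v2, h1, h2, h3⟩ := ih hw2
      exact ⟨y :: l1, x, l2, u2, v2, by rw [h1]; rfl, h2,
        by rw [hw1, h3, List.flatMap_cons, List.append_assoc]⟩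
    · -- f y = u ++ w, a :: v = w ++ l'.flatMap f
      match w, hw2 with
      | [], hw2 =>
        obtain ⟨l1, x, l2, u2, v2, h1, h2, h3⟩ := ih (u := []) (by simpa using hw2.symm)
        have h4 : l1.flatMap f = [] ∧ u2 = [] := by
          constructor <;> [skip; skip] <;>
            · have := h3.symm
              simp only [List.append_eq_nil_iff] at this
              tauto
        refine ⟨y :: l1, x, l2, u2, v2, by rw [h1]; rfl, h2, ?_⟩
        rw [List.flatMap_cons, h4.1, h4.2]
        simp [hw1]
      | b :: w', hw2 =>
        have hb : a = b ∧ v = w' ++ l'.flatMap f := by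
          constructor <;> [skip; skip] <;>
            · have := hw2
              simp only [List.cons_append, List.cons.injEq] at this
              tauto
        exact ⟨[], y, l', u, w', by simp, by rw [hw1, hb.1], by simp⟩

/-- Decomposing `List.range` along an append split. -/
lemma range_eq_append {n : ℕ} {l1 l2 : List ℕ} {x : ℕ} (h : List.range n = l1 ++ x :: l2) :
    l1 = List.range x ∧ x < n ∧ l2 = (List.range (n - x - 1)).map (fun t => x + 1 + t) := by
  have hlen' := congrArg List.length h
  simp only [List.length_range, List.length_append, List.length_cons] at hlen'
  have hl1 : l1 = List.range l1.length := by
    have h1 : (List.range n).take l1.length = l1 := by rw [h]; exact List.take_left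
    rw [List.take_range] at h1
    rw [Nat.min_eq_left (by omega)] at h1
    exact h1.symm
  have hdrop : (List.range n).drop l1.length = x :: l2 := by
    rw [h]; exact List.drop_left
  have hr : List.range n
      = List.range l1.length ++ (List.range (n - l1.length)).map (fun t => l1.length + t) := by
    conv_lhs => rw [show n = l1.length + (n - l1.length) from by omega]
    exact List.range_add
  rw [hr, List.drop_left' (by simp)] at hdrop
  have hs : n - l1.length = 1 + (n - l1.length - 1) := by omega
  rw [hs, List.range_add] at hdrop
  have hone : List.range 1 = [0] := rfl
  rw [hone] at hdrop
  simp only [List.map_append, List.map_cons, List.map_nil, Nat.add_zero, List.map_map,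
    List.cons_append, List.nil_append, List.cons.injEq] at hdrop
  obtain ⟨hx, hl2⟩ := hdrop
  refine ⟨by rw [hl1, hx], by omega, ?_⟩
  rw [← hl2, ← hx]
  apply List.map_congr_left
  intro t _
  simp only [Function.comp_apply]
  omega
/-! ### Sum helpers -/

lemma sum_range_add (f : ℕ → ℕ) (m n : ℕ) :
    ∑ b ∈ Finset.range (m + n), f b
      = ∑ b ∈ Finset.range m, f b + ∑ t ∈ Finset.range n, f (m + t) := by
  induction n with
  | zero => simp
  | succ n ih => rw [← Nat.add_assoc, Finset.sum_range_succ, ih, Finset.sum_range_succ]; omega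

lemma sum_range_split (f : ℕ → ℕ) {M y : ℕ} (hy : y < M) :
    ∑ b ∈ Finset.range M, f b
      = ∑ b ∈ Finset.range y, f b + f y + ∑ t ∈ Finset.range (M - y - 1), f (y + 1 + t) := by
  have hM : M = (y + 1) + (M - y - 1) := by omega
  conv_lhs => rw [hM, sum_range_add, Finset.sum_range_succ]

/-! ### Per-row and per-column counts -/

/-- Total count of `v`-labels (box and edge) in the `0`-indexed row `a` (true row `a+1`). -/
noncomputable def rowCnt (v a : ℕ) : ℕ :=
  ∑ b ∈ Finset.range (nu.part 1), (occB T v (a+1) (b+1) + occE T v (a+1) (b+1))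

/-- Total count of `v`-labels in the `0`-indexed column `b` (true column `b+1`). -/
noncomputable def colCnt (v b : ℕ) : ℕ :=
  ∑ a ∈ Finset.range nu.len, (occB T v (a+1) (b+1) + occE T v (a+1) (b+1))

lemma count_flatMap_of_reverse_eq {l1 : List ℕ} {y n : ℕ}
    (hl : l1.reverse = (List.range n).map (fun t => y + 1 + t)) (f : ℕ → List ℕ) (v : ℕ) :
    (l1.flatMap f).count v = ∑ t ∈ Finset.range n, (f (y + 1 + t)).count v := by
  rw [List.count_flatMap]
  rw [← List.sum_reverse, ← List.map_reverse, hl, List.map_map, sum_map_range]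
  simp [Function.comp]

/-- The column word of (0-indexed) column `b`. -/
noncomputable def colw (b : ℕ) : List ℕ :=
  (List.range nu.len).flatMap fun a => T.boxWord (a+1) (b+1) ++ T.edgeWord (a+1) (b+1)

lemma count_colw (v b : ℕ) : ((colw T b).count v) = colCnt T v b := by
  rw [colw, count_flatMap_range, colCnt]
  refine Finset.sum_congr rfl fun a _ => ?_
  rw [List.count_append, count_boxWord, count_edgeWord]

lemma wc_eq : T.wc = ((List.range (nu.part 1)).reverse).flatMap (colw T) := rfl

/-- Decomposition of the column reading word at the box `(i0+1, j0+1)`. -/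
lemma wc_decomp (i0 j0 : ℕ) (hi : i0 < nu.len) (hj : j0 < nu.part 1) :
    ∃ rest, T.wc =
      ((((List.range (nu.part 1 - j0 - 1)).map (fun t => j0 + 1 + t)).reverse).flatMap (colw T)
        ++ (((List.range i0).flatMap fun a => T.boxWord (a+1) (j0+1) ++ T.edgeWord (a+1) (j0+1))
        ++ (T.boxWord (i0+1) (j0+1) ++ (T.edgeWord (i0+1) (j0+1) ++ rest)))) := by
  have hM : nu.part 1 = (j0 + 1) + (nu.part 1 - j0 - 1) := by omega
  have h1 : (List.range (nu.part 1)).reverse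
      = ((List.range (nu.part 1 - j0 - 1)).map (fun t => j0 + 1 + t)).reverse
        ++ (j0 :: (List.range j0).reverse) := by
    conv_lhs => rw [hM, List.range_add, List.range_succ]
    simp [List.reverse_append]
  have hL : nu.len = (i0 + 1) + (nu.len - i0 - 1) := by omega
  have h2 : colw T j0 = ((List.range i0).flatMap fun a =>
        T.boxWord (a+1) (j0+1) ++ T.edgeWord (a+1) (j0+1))
      ++ (T.boxWord (i0+1) (j0+1) ++ (T.edgeWord (i0+1) (j0+1)
      ++ (((List.range (nu.len - i0 - 1)).map (fun t => i0 + 1 + t)).flatMap fun a =>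
            T.boxWord (a+1) (j0+1) ++ T.edgeWord (a+1) (j0+1)))) := by
    rw [colw]
    conv_lhs => rw [hL, List.range_add, List.range_succ]
    simp [List.flatMap_append, List.append_assoc]
  refine ⟨(((List.range (nu.len - i0 - 1)).map (fun t => i0 + 1 + t)).flatMap fun a =>
        T.boxWord (a+1) (j0+1) ++ T.edgeWord (a+1) (j0+1))
      ++ ((List.range j0).reverse.flatMap (colw T)), ?_⟩
  rw [wc_eq, h1, List.flatMap_append, List.flatMap_cons, h2]
  simp [List.append_assoc]

/-- Count of labels `v` in columns strictly right of column `j0+1`. -/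
noncomputable def leftCnt (v j0 : ℕ) : ℕ := ∑ t ∈ Finset.range (nu.part 1 - j0 - 1), colCnt T v (j0 + 1 + t)

lemma count_wleft (v j0 : ℕ) :
    ((((List.range (nu.part 1 - j0 - 1)).map (fun t => j0 + 1 + t)).reverse).flatMap
        (colw T)).count v = leftCnt T v j0 := by
  rw [count_flatMap_rev, List.count_flatMap, List.map_map, sum_map_range, leftCnt]
  refine Finset.sum_congr rfl fun t _ => ?_
  simp only [Function.comp_apply]
  rw [count_colw]

lemma count_colseg (v j0 i0 : ℕ) :
    (((List.range i0).flatMap fun a =>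
        T.boxWord (a+1) (j0+1) ++ T.edgeWord (a+1) (j0+1)).count v)
      = ∑ a ∈ Finset.range i0, (occB T v (a+1) (j0+1) + occE T v (a+1) (j0+1)) := by
  rw [count_flatMap_range]
  refine Finset.sum_congr rfl fun a _ => ?_
  rw [List.count_append, count_boxWord, count_edgeWord]
/-! ### The core inequalities -/

lemma core_box {k x y : ℕ} (hx : x < nu.len) (hy : y < nu.part 1)
    (hb : IsBox lam nu (x+1) (y+1)) (hbv : T.box (x+1) (y+1) = k + 1)
    (hlat :
      leftCnt T (k+1) y
        + ((∑ a ∈ Finset.range x, (occB T (k+1) (a+1) (y+1) + occE T (k+1) (a+1) (y+1)))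
        + occB T (k+1) (x+1) (y+1))
      ≤ leftCnt T k y
        + ((∑ a ∈ Finset.range x, (occB T k (a+1) (y+1) + occE T k (a+1) (y+1)))
        + occB T k (x+1) (y+1))) :
    (∑ a ∈ Finset.range x, rowCnt T (k+1) a)
      + (∑ t ∈ Finset.range (nu.part 1 - y - 1), occB T (k+1) (x+1) (y+1+t+1)) + 1
    ≤ (∑ a ∈ Finset.range x, rowCnt T k a)
      + ∑ t ∈ Finset.range (nu.part 1 - y - 1), occB T k (x+1) (y+1+t+1) := by
  have hwit : HasAt T (k+1) (x+1) (y+1) false := by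
    simp only [HasAt, if_false]; exact ⟨hb, hbv⟩
  have hA : ∑ a ∈ Finset.range x, rowCnt T (k+1) a
      = (∑ a ∈ Finset.range x, (occB T (k+1) (a+1) (y+1) + occE T (k+1) (a+1) (y+1)))
        + ∑ a ∈ Finset.range x, ∑ t ∈ Finset.range (nu.part 1 - y - 1),
            (occB T (k+1) (a+1) (y+1+t+1) + occE T (k+1) (a+1) (y+1+t+1)) := by
    rw [← Finset.sum_add_distrib]
    refine Finset.sum_congr rfl fun a ha => ?_
    simp only [Finset.mem_range] at ha
    rw [rowCnt, sum_range_split _ hy]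
    have hz : ∑ b ∈ Finset.range y,
        (occB T (k+1) (a+1) (b+1) + occE T (k+1) (a+1) (b+1)) = 0 :=
      Finset.sum_eq_zero fun b hbm => by
        simp only [Finset.mem_range] at hbm
        rw [occB_nw T hwit le_rfl (by omega) (by simp only [Bool.toNat_false]; omega),
            occE_nw T hwit le_rfl (by omega) (by simp only [Bool.toNat_false]; omega)]
        rfl
    rw [hz]
    omega
  have hB : (∑ a ∈ Finset.range x, (occB T k (a+1) (y+1) + occE T k (a+1) (y+1)))
        + ∑ a ∈ Finset.range x, ∑ t ∈ Finset.range (nu.part 1 - y - 1),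
            (occB T k (a+1) (y+1+t+1) + occE T k (a+1) (y+1+t+1))
      ≤ ∑ a ∈ Finset.range x, rowCnt T k a := by
    rw [← Finset.sum_add_distrib]
    refine Finset.sum_le_sum fun a ha => ?_
    rw [rowCnt, sum_range_split _ hy]
    omega
  have hC1 : ∀ t ∈ Finset.range (nu.part 1 - y - 1),
      (∑ a ∈ Finset.range x, (occB T (k+1) (a+1) (y+1+t+1) + occE T (k+1) (a+1) (y+1+t+1)))
        + occB T (k+1) (x+1) (y+1+t+1) ≤ colCnt T (k+1) (y+1+t) := by
    intro t _
    rw [colCnt, sum_range_split _ hx]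
    omega
  have hC2 : ∀ t ∈ Finset.range (nu.part 1 - y - 1),
      colCnt T k (y+1+t) ≤ (∑ a ∈ Finset.range x,
          (occB T k (a+1) (y+1+t+1) + occE T k (a+1) (y+1+t+1)))
        + occB T k (x+1) (y+1+t+1) := by
    intro t ht
    simp only [Finset.mem_range] at ht
    rw [colCnt, sum_range_split _ hx]
    have hz1 : occE T k (x+1) (y+1+t+1) = 0 :=
      occE_se T hwit (by omega) (by omega) (by simp only [Bool.toNat_false]; omega)
    have hz2 : ∑ d ∈ Finset.range (nu.len - x - 1),
        (occB T k (x+1+d+1) (y+1+t+1) + occE T k (x+1+d+1) (y+1+t+1)) = 0 :=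
      Finset.sum_eq_zero fun d hd => by
        rw [occB_se T hwit (by omega) (by omega) (by simp only [Bool.toNat_false]; omega),
            occE_se T hwit (by omega) (by omega) (by simp only [Bool.toNat_false]; omega)]
        rfl
    omega
  have hocc1 : occB T (k+1) (x+1) (y+1) = 1 := by rw [occB, if_pos ⟨hb, hbv⟩]
  have hocc2 : occB T k (x+1) (y+1) = 0 := by
    rw [occB, if_neg]; rintro ⟨_, hc⟩; omega
  have hs1 : (∑ a ∈ Finset.range x, ∑ t ∈ Finset.range (nu.part 1 - y - 1),
        (occB T (k+1) (a+1) (y+1+t+1) + occE T (k+1) (a+1) (y+1+t+1)))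
      + (∑ t ∈ Finset.range (nu.part 1 - y - 1), occB T (k+1) (x+1) (y+1+t+1)) ≤ leftCnt T (k+1) y := by
    rw [leftCnt]
    calc (∑ a ∈ Finset.range x, ∑ t ∈ Finset.range (nu.part 1 - y - 1),
        (occB T (k+1) (a+1) (y+1+t+1) + occE T (k+1) (a+1) (y+1+t+1)))
          + (∑ t ∈ Finset.range (nu.part 1 - y - 1), occB T (k+1) (x+1) (y+1+t+1))
        = ∑ t ∈ Finset.range (nu.part 1 - y - 1), ((∑ a ∈ Finset.range x,
            (occB T (k+1) (a+1) (y+1+t+1) + occE T (k+1) (a+1) (y+1+t+1)))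
            + occB T (k+1) (x+1) (y+1+t+1)) := by
          rw [Finset.sum_add_distrib, Finset.sum_comm]
      _ ≤ _ := Finset.sum_le_sum hC1
  have hs2 : leftCnt T k y ≤ (∑ a ∈ Finset.range x, ∑ t ∈ Finset.range (nu.part 1 - y - 1),
        (occB T k (a+1) (y+1+t+1) + occE T k (a+1) (y+1+t+1)))
      + ∑ t ∈ Finset.range (nu.part 1 - y - 1), occB T k (x+1) (y+1+t+1) := by
    rw [leftCnt]
    calc ∑ t ∈ Finset.range (nu.part 1 - y - 1), colCnt T k (y+1+t)
        ≤ ∑ t ∈ Finset.range (nu.part 1 - y - 1), ((∑ a ∈ Finset.range x,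
            (occB T k (a+1) (y+1+t+1) + occE T k (a+1) (y+1+t+1)))
            + occB T k (x+1) (y+1+t+1)) := Finset.sum_le_sum hC2
      _ = _ := by rw [Finset.sum_add_distrib, Finset.sum_comm]
  omega

lemma core_edge {k x y : ℕ} (hx : x < nu.len) (hy : y < nu.part 1)
    (he : (k+1) ∈ T.edge (x+1) (y+1))
    (hlat :
      leftCnt T (k+1) y
        + ((∑ a ∈ Finset.range x, (occB T (k+1) (a+1) (y+1) + occE T (k+1) (a+1) (y+1)))
        + (occB T (k+1) (x+1) (y+1) + occE T (k+1) (x+1) (y+1)))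
      ≤ leftCnt T k y
        + ((∑ a ∈ Finset.range x, (occB T k (a+1) (y+1) + occE T k (a+1) (y+1)))
        + (occB T k (x+1) (y+1) + occE T k (x+1) (y+1)))) :
    (∑ a ∈ Finset.range x, rowCnt T (k+1) a)
      + (∑ b ∈ Finset.range (nu.part 1), occB T (k+1) (x+1) (b+1))
      + (∑ t ∈ Finset.range (nu.part 1 - y - 1), occE T (k+1) (x+1) (y+1+t+1))
      + occE T (k+1) (x+1) (y+1)
    ≤ (∑ a ∈ Finset.range x, rowCnt T k a)
      + (∑ b ∈ Finset.range (nu.part 1), occB T k (x+1) (b+1))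
      + (∑ t ∈ Finset.range (nu.part 1 - y - 1), occE T k (x+1) (y+1+t+1))
      + occE T k (x+1) (y+1) := by
  have hwit : HasAt T (k+1) (x+1) (y+1) true := by
    simp only [HasAt, if_true]; exact he
  have hA : ∑ a ∈ Finset.range x, rowCnt T (k+1) a
      = (∑ a ∈ Finset.range x, (occB T (k+1) (a+1) (y+1) + occE T (k+1) (a+1) (y+1)))
        + ∑ a ∈ Finset.range x, ∑ t ∈ Finset.range (nu.part 1 - y - 1),
            (occB T (k+1) (a+1) (y+1+t+1) + occE T (k+1) (a+1) (y+1+t+1)) := by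
    rw [← Finset.sum_add_distrib]
    refine Finset.sum_congr rfl fun a ha => ?_
    simp only [Finset.mem_range] at ha
    rw [rowCnt, sum_range_split _ hy]
    have hz : ∑ b ∈ Finset.range y,
        (occB T (k+1) (a+1) (b+1) + occE T (k+1) (a+1) (b+1)) = 0 :=
      Finset.sum_eq_zero fun b hbm => by
        simp only [Finset.mem_range] at hbm
        rw [occB_nw T hwit le_rfl (by omega) (by simp only [Bool.toNat_true]; omega),
            occE_nw T hwit le_rfl (by omega) (by simp only [Bool.toNat_true]; omega)]
        rfl
    rw [hz]
    omega
  have hB : (∑ a ∈ Finset.range x, (occB T k (a+1) (y+1) + occE T k (a+1) (y+1)))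
        + ∑ a ∈ Finset.range x, ∑ t ∈ Finset.range (nu.part 1 - y - 1),
            (occB T k (a+1) (y+1+t+1) + occE T k (a+1) (y+1+t+1))
      ≤ ∑ a ∈ Finset.range x, rowCnt T k a := by
    rw [← Finset.sum_add_distrib]
    refine Finset.sum_le_sum fun a ha => ?_
    rw [rowCnt, sum_range_split _ hy]
    omega
  -- split of the box-count sum of row x+1 (for both labels)
  have hD1 : ∑ b ∈ Finset.range (nu.part 1), occB T (k+1) (x+1) (b+1)
      = occB T (k+1) (x+1) (y+1)
        + ∑ t ∈ Finset.range (nu.part 1 - y - 1), occB T (k+1) (x+1) (y+1+t+1) := by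
    rw [sum_range_split _ hy]
    have hz : ∑ b ∈ Finset.range y, occB T (k+1) (x+1) (b+1) = 0 :=
      Finset.sum_eq_zero fun b hbm => by
        simp only [Finset.mem_range] at hbm
        rw [occB_nw T hwit le_rfl (by omega) (by simp only [Bool.toNat_true]; omega)]
    rw [hz]
    omega
  have hD2 : occB T k (x+1) (y+1) + ∑ t ∈ Finset.range (nu.part 1 - y - 1), occB T k (x+1) (y+1+t+1)
      ≤ ∑ b ∈ Finset.range (nu.part 1), occB T k (x+1) (b+1) := by
    rw [sum_range_split _ hy]
    omega
  have hC1 : ∀ t ∈ Finset.range (nu.part 1 - y - 1),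
      (∑ a ∈ Finset.range x, (occB T (k+1) (a+1) (y+1+t+1) + occE T (k+1) (a+1) (y+1+t+1)))
        + (occB T (k+1) (x+1) (y+1+t+1) + occE T (k+1) (x+1) (y+1+t+1))
        ≤ colCnt T (k+1) (y+1+t) := by
    intro t _
    rw [colCnt, sum_range_split _ hx]
    omega
  have hC2 : ∀ t ∈ Finset.range (nu.part 1 - y - 1),
      colCnt T k (y+1+t) ≤ (∑ a ∈ Finset.range x,
          (occB T k (a+1) (y+1+t+1) + occE T k (a+1) (y+1+t+1)))
        + (occB T k (x+1) (y+1+t+1) + occE T k (x+1) (y+1+t+1)) := by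
    intro t ht
    simp only [Finset.mem_range] at ht
    rw [colCnt, sum_range_split _ hx]
    have hz2 : ∑ d ∈ Finset.range (nu.len - x - 1),
        (occB T k (x+1+d+1) (y+1+t+1) + occE T k (x+1+d+1) (y+1+t+1)) = 0 :=
      Finset.sum_eq_zero fun d hd => by
        rw [occB_se T hwit (by omega) (by omega) (by simp only [Bool.toNat_true]; omega),
            occE_se T hwit (by omega) (by omega) (by simp only [Bool.toNat_true]; omega)]
        rfl
    omega
  have hs1 : (∑ a ∈ Finset.range x, ∑ t ∈ Finset.range (nu.part 1 - y - 1),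
        (occB T (k+1) (a+1) (y+1+t+1) + occE T (k+1) (a+1) (y+1+t+1)))
      + ((∑ t ∈ Finset.range (nu.part 1 - y - 1), occB T (k+1) (x+1) (y+1+t+1))
      + (∑ t ∈ Finset.range (nu.part 1 - y - 1), occE T (k+1) (x+1) (y+1+t+1))) ≤ leftCnt T (k+1) y := by
    rw [leftCnt]
    calc (∑ a ∈ Finset.range x, ∑ t ∈ Finset.range (nu.part 1 - y - 1),
        (occB T (k+1) (a+1) (y+1+t+1) + occE T (k+1) (a+1) (y+1+t+1)))
          + ((∑ t ∈ Finset.range (nu.part 1 - y - 1), occB T (k+1) (x+1) (y+1+t+1))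
          + (∑ t ∈ Finset.range (nu.part 1 - y - 1), occE T (k+1) (x+1) (y+1+t+1)))
        = ∑ t ∈ Finset.range (nu.part 1 - y - 1), ((∑ a ∈ Finset.range x,
            (occB T (k+1) (a+1) (y+1+t+1) + occE T (k+1) (a+1) (y+1+t+1)))
            + (occB T (k+1) (x+1) (y+1+t+1) + occE T (k+1) (x+1) (y+1+t+1))) := by
          rw [Finset.sum_add_distrib, Finset.sum_add_distrib, Finset.sum_comm]
      _ ≤ _ := Finset.sum_le_sum hC1
  have hs2 : leftCnt T k y ≤ (∑ a ∈ Finset.range x, ∑ t ∈ Finset.range (nu.part 1 - y - 1),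
        (occB T k (a+1) (y+1+t+1) + occE T k (a+1) (y+1+t+1)))
      + ((∑ t ∈ Finset.range (nu.part 1 - y - 1), occB T k (x+1) (y+1+t+1))
      + (∑ t ∈ Finset.range (nu.part 1 - y - 1), occE T k (x+1) (y+1+t+1))) := by
    rw [leftCnt]
    calc ∑ t ∈ Finset.range (nu.part 1 - y - 1), colCnt T k (y+1+t)
        ≤ ∑ t ∈ Finset.range (nu.part 1 - y - 1), ((∑ a ∈ Finset.range x,
            (occB T k (a+1) (y+1+t+1) + occE T k (a+1) (y+1+t+1)))
            + (occB T k (x+1) (y+1+t+1) + occE T k (x+1) (y+1+t+1))) :=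
          Finset.sum_le_sum hC2
      _ = _ := by rw [Finset.sum_add_distrib, Finset.sum_add_distrib, Finset.sum_comm]
  omega
/-! ### Reduction to prefixes ending at an occurrence of `k+1` -/

lemma count_single (x v : ℕ) : ([x] : List ℕ).count v = if x = v then 1 else 0 := by
  simp [List.count_cons]

lemma lattice_of_splits {w : List ℕ} {k : ℕ}
    (H : ∀ u v, w = u ++ (k+1) :: v → u.count (k+1) + 1 ≤ u.count k) :
    ∀ t, ((w.take t).count (k+1) ≤ (w.take t).count k) := by
  intro t
  induction t with
  | zero => simp
  | succ t ih =>
    by_cases hlen : w.length ≤ t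
    · have heq : w.take (t+1) = w.take t := by
        rw [List.take_of_length_le hlen, List.take_of_length_le (by omega)]
      rw [heq]
      exact ih
    · push_neg at hlen
      have hw : w = w.take t ++ w[t] :: w.drop (t+1) := by
        conv_lhs => rw [← List.take_append_drop t w, List.drop_eq_getElem_cons hlen]
      have htake : w.take (t+1) = w.take t ++ [w[t]] := by
        rw [List.take_succ, List.getElem?_eq_getElem hlen]
        rfl
      by_cases hx : w[t] = k + 1
      · have hH := H (w.take t) (w.drop (t+1)) (by rw [← hx]; exact hw)
        rw [htake, hx, List.count_append, List.count_append, count_single, count_single,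
          if_pos rfl, if_neg (show ¬ (k+1 = k) by omega)]
        omega
      · rw [htake, List.count_append, List.count_append, count_single, count_single]
        rw [if_neg hx]
        split <;> omega

/-! ### Splitting the small words -/

lemma boxWord_split {i j a : ℕ} {u3 v3 : List ℕ} (hsp : T.boxWord i j = u3 ++ a :: v3) :
    IsBox lam nu i j ∧ T.box i j = a ∧ u3 = [] ∧ v3 = [] := by
  unfold EdgeTableau.boxWord at hsp
  by_cases hb : IsBox lam nu i j
  · rw [if_pos hb] at hsp
    have hl := congrArg List.length hsp
    simp only [List.length_cons, List.length_append, List.length_nil] at hl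
    have hu3 : u3 = [] := List.length_eq_zero_iff.mp (by omega)
    have hv3 : v3 = [] := List.length_eq_zero_iff.mp (by omega)
    subst hu3; subst hv3
    simp only [List.nil_append, List.cons.injEq] at hsp
    exact ⟨hb, hsp.1, rfl, rfl⟩
  · rw [if_neg hb] at hsp
    exact absurd hsp.symm (by simp)

lemma edgeWord_split {i j k : ℕ} {u3 v3 : List ℕ} (hsp : T.edgeWord i j = u3 ++ (k+1) :: v3) :
    (k+1) ∈ T.edge i j ∧ u3.count (k+1) = 0 ∧ u3.count k = occE T k i j := by
  have hnd : (u3 ++ (k+1) :: v3).Nodup := hsp ▸ Finset.sort_nodup _ _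
  have hsorted : (u3 ++ (k+1) :: v3).Pairwise (· ≤ ·) := hsp ▸ Finset.pairwise_sort _ _
  have hmem : (k+1) ∈ T.edge i j := by
    have : (k+1) ∈ T.edgeWord i j := by rw [hsp]; simp
    simpa [EdgeTableau.edgeWord] using this
  have hnotmem : (k+1) ∉ u3 := fun hm =>
    (List.disjoint_of_nodup_append hnd) hm (by simp)
  have hnd3 : u3.Nodup := hnd.of_append_left
  refine ⟨hmem, List.count_eq_zero_of_not_mem hnotmem, ?_⟩
  by_cases hk : k ∈ T.edge i j
  · have hk3 : k ∈ u3 ++ (k+1) :: v3 := by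
      rw [← hsp]; simpa [EdgeTableau.edgeWord] using hk
    have hku3 : k ∈ u3 := by
      rcases List.mem_append.mp hk3 with h1 | h1
      · exact h1
      · rcases List.mem_cons.mp h1 with h2 | h2
        · omega
        · exfalso
          have hsuf := hsorted.sublist (List.sublist_append_right u3 _)
          have := (List.pairwise_cons.mp hsuf).1 k h2
          omega
    rw [List.count_eq_one_of_mem hnd3 hku3, occE, if_pos hk]
  · have hknot : k ∉ u3 := fun hm => hk (by
      have : k ∈ T.edgeWord i j := by rw [hsp]; exact List.mem_append.mpr (Or.inl hm)
      simpa [EdgeTableau.edgeWord] using this)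
    rw [List.count_eq_zero_of_not_mem hknot, occE, if_neg hk]

lemma reverse_range_decomp {M : ℕ} {m1 m2 : List ℕ} {y : ℕ}
    (hm : (List.range M).reverse = m1 ++ y :: m2) :
    y < M ∧ m1.reverse = (List.range (M - y - 1)).map (fun t => y + 1 + t) := by
  have h2 : List.range M = m2.reverse ++ y :: m1.reverse := by
    have h3 := congrArg List.reverse hm
    rw [List.reverse_reverse] at h3
    rw [h3]
    simp
  obtain ⟨-, hy, hm1⟩ := range_eq_append h2
  exact ⟨hy, hm1⟩

/-! ### The row reading word -/

/-- The box part of the reading word of row `i0+1`. -/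
noncomputable def rwB (i0 : ℕ) : List ℕ :=
  ((List.range (nu.part 1)).reverse).flatMap fun j0 => T.boxWord (i0+1) (j0+1)

/-- The edge part of the reading word of row `i0+1`. -/
noncomputable def rwE (i0 : ℕ) : List ℕ :=
  ((List.range (nu.part 1)).reverse).flatMap fun j0 => T.edgeWord (i0+1) (j0+1)

lemma wr_eq : T.wr = (List.range nu.len).flatMap fun i0 => rwB T i0 ++ rwE T i0 := rfl

lemma count_rwB (v i0 : ℕ) :
    (rwB T i0).count v = ∑ b ∈ Finset.range (nu.part 1), occB T v (i0+1) (b+1) := by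
  rw [rwB, count_flatMap_rev, count_flatMap_range]
  exact Finset.sum_congr rfl fun b _ => count_boxWord T v (i0+1) (b+1)

lemma count_F (v i0 : ℕ) : ((rwB T i0 ++ rwE T i0).count v) = rowCnt T v i0 := by
  rw [List.count_append, count_rwB, rwE, count_flatMap_rev, count_flatMap_range, rowCnt,
    Finset.sum_add_distrib]
  congr 1
  exact Finset.sum_congr rfl fun b _ => count_edgeWord T v (i0+1) (b+1)

lemma count_chunk (v x : ℕ) :
    (((List.range x).flatMap fun i0 => rwB T i0 ++ rwE T i0).count v)
      = ∑ a ∈ Finset.range x, rowCnt T v a := by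
  rw [count_flatMap_range]
  exact Finset.sum_congr rfl fun a _ => count_F T v a
end LatticeAux

/-- If the column reading word of an edge-labeled tableau is lattice, then so
is its row reading word. -/
theorem row_lattice_of_col_lattice (lam mu nu : SeqPartition)
    (T : EdgeTableau lam mu nu) (h : IsLatticeWord T.wc) :
    IsLatticeWord T.wr := by
  intro k hk
  apply LatticeAux.lattice_of_splits
  intro u v huv
  rw [LatticeAux.wr_eq] at huv
  obtain ⟨l1, x, l2, u2, v2, hl, hFx, hu⟩ := LatticeAux.flatMap_split _ _ huv
  obtain ⟨hl1, hxL, -⟩ := LatticeAux.range_eq_append hl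
  subst hl1
  -- handler for a `k+1` located in a box
  have hbox_handler : ∀ (u2' w'' : List ℕ), LatticeAux.rwB T x = u2' ++ (k+1) :: w'' →
      u = ((List.range x).flatMap fun i0 => LatticeAux.rwB T i0 ++ LatticeAux.rwE T i0) ++ u2' →
      u.count (k+1) + 1 ≤ u.count k := by
    intro u2' w'' hsplit huEq
    rw [LatticeAux.rwB] at hsplit
    obtain ⟨m1, y, m2, u3, v3, hm, hbw, hu2⟩ := LatticeAux.flatMap_split _ _ hsplit
    obtain ⟨hyM, hm1⟩ := LatticeAux.reverse_range_decomp hm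
    obtain ⟨hbox, hboxv, hu3nil, -⟩ := LatticeAux.boxWord_split T hbw
    subst hu3nil
    have hu2' : u2' = m1.flatMap (fun j0 => T.boxWord (x+1) (j0+1)) := by simpa using hu2
    have hucnt : ∀ w', u.count w' = (∑ a ∈ Finset.range x, LatticeAux.rowCnt T w' a)
        + ∑ t ∈ Finset.range (nu.part 1 - y - 1), LatticeAux.occB T w' (x+1) (y+1+t+1) := by
      intro w'
      rw [huEq, hu2', List.count_append, LatticeAux.count_chunk,
        LatticeAux.count_flatMap_of_reverse_eq hm1 _ w']
      congr 1
      exact Finset.sum_congr rfl fun t _ => LatticeAux.count_boxWord T w' (x+1) (y+1+t+1)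
    obtain ⟨rest, hwc⟩ := LatticeAux.wc_decomp T x y hxL hyM
    have hwc2 : T.wc =
        ((((List.range (nu.part 1 - y - 1)).map (fun t => y + 1 + t)).reverse).flatMap
            (LatticeAux.colw T)
          ++ (((List.range x).flatMap fun a => T.boxWord (a+1) (y+1) ++ T.edgeWord (a+1) (y+1))
          ++ T.boxWord (x+1) (y+1))) ++ (T.edgeWord (x+1) (y+1) ++ rest) := by
      rw [hwc]; simp [List.append_assoc]
    have hlat0 := h k hk (((((List.range (nu.part 1 - y - 1)).map
        (fun t => y + 1 + t)).reverse).flatMap (LatticeAux.colw T)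
      ++ (((List.range x).flatMap fun a => T.boxWord (a+1) (y+1) ++ T.edgeWord (a+1) (y+1))
      ++ T.boxWord (x+1) (y+1)))).length
    rw [hwc2, List.take_left] at hlat0
    have hPcnt : ∀ w', (((((List.range (nu.part 1 - y - 1)).map
          (fun t => y + 1 + t)).reverse).flatMap (LatticeAux.colw T)
        ++ (((List.range x).flatMap fun a => T.boxWord (a+1) (y+1) ++ T.edgeWord (a+1) (y+1))
        ++ T.boxWord (x+1) (y+1)))).count w'
        = LatticeAux.leftCnt T w' y
          + ((∑ a ∈ Finset.range x,
              (LatticeAux.occB T w' (a+1) (y+1) + LatticeAux.occE T w' (a+1) (y+1)))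
          + LatticeAux.occB T w' (x+1) (y+1)) := by
      intro w'
      rw [List.count_append, List.count_append, LatticeAux.count_wleft,
        LatticeAux.count_colseg, LatticeAux.count_boxWord]
    rw [hPcnt, hPcnt] at hlat0
    rw [hucnt, hucnt]
    exact LatticeAux.core_box T hxL hyM hbox hboxv hlat0
  -- handler for a `k+1` located on an edge
  have hedge_handler : ∀ (w1 v2' : List ℕ), LatticeAux.rwE T x = w1 ++ (k+1) :: v2' →
      u = ((List.range x).flatMap fun i0 => LatticeAux.rwB T i0 ++ LatticeAux.rwE T i0)
        ++ (LatticeAux.rwB T x ++ w1) →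
      u.count (k+1) + 1 ≤ u.count k := by
    intro w1 v2' hsplit huEq
    rw [LatticeAux.rwE] at hsplit
    obtain ⟨m1, y, m2, u3, v3, hm, hew, hu2⟩ := LatticeAux.flatMap_split _ _ hsplit
    obtain ⟨hyM, hm1⟩ := LatticeAux.reverse_range_decomp hm
    obtain ⟨hmem, hu3a, hu3b⟩ := LatticeAux.edgeWord_split T hew
    have hucnt : ∀ w', u.count w' = ((∑ a ∈ Finset.range x, LatticeAux.rowCnt T w' a)
        + (∑ b ∈ Finset.range (nu.part 1), LatticeAux.occB T w' (x+1) (b+1))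
        + (∑ t ∈ Finset.range (nu.part 1 - y - 1), LatticeAux.occE T w' (x+1) (y+1+t+1)))
        + u3.count w' := by
      intro w'
      rw [huEq, hu2, List.count_append, List.count_append, List.count_append,
        LatticeAux.count_chunk, LatticeAux.count_rwB,
        LatticeAux.count_flatMap_of_reverse_eq hm1 _ w']
      have hEq : ∑ t ∈ Finset.range (nu.part 1 - y - 1), (T.edgeWord (x+1) (y+1+t+1)).count w'
          = ∑ t ∈ Finset.range (nu.part 1 - y - 1), LatticeAux.occE T w' (x+1) (y+1+t+1) :=
        Finset.sum_congr rfl fun t _ => LatticeAux.count_edgeWord T w' (x+1) (y+1+t+1)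
      rw [hEq]
      omega
    obtain ⟨rest, hwc⟩ := LatticeAux.wc_decomp T x y hxL hyM
    have hwc2 : T.wc =
        ((((List.range (nu.part 1 - y - 1)).map (fun t => y + 1 + t)).reverse).flatMap
            (LatticeAux.colw T)
          ++ (((List.range x).flatMap fun a => T.boxWord (a+1) (y+1) ++ T.edgeWord (a+1) (y+1))
          ++ (T.boxWord (x+1) (y+1) ++ T.edgeWord (x+1) (y+1)))) ++ rest := by
      rw [hwc]; simp [List.append_assoc]
    have hlat0 := h k hk (((((List.range (nu.part 1 - y - 1)).map
        (fun t => y + 1 + t)).reverse).flatMap (LatticeAux.colw T)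
      ++ (((List.range x).flatMap fun a => T.boxWord (a+1) (y+1) ++ T.edgeWord (a+1) (y+1))
      ++ (T.boxWord (x+1) (y+1) ++ T.edgeWord (x+1) (y+1))))).length
    rw [hwc2, List.take_left] at hlat0
    have hPcnt : ∀ w', (((((List.range (nu.part 1 - y - 1)).map
          (fun t => y + 1 + t)).reverse).flatMap (LatticeAux.colw T)
        ++ (((List.range x).flatMap fun a => T.boxWord (a+1) (y+1) ++ T.edgeWord (a+1) (y+1))
        ++ (T.boxWord (x+1) (y+1) ++ T.edgeWord (x+1) (y+1))))).count w'
        = LatticeAux.leftCnt T w' y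
          + ((∑ a ∈ Finset.range x,
              (LatticeAux.occB T w' (a+1) (y+1) + LatticeAux.occE T w' (a+1) (y+1)))
          + (LatticeAux.occB T w' (x+1) (y+1) + LatticeAux.occE T w' (x+1) (y+1))) := by
      intro w'
      rw [List.count_append, List.count_append, List.count_append, LatticeAux.count_wleft,
        LatticeAux.count_colseg, LatticeAux.count_boxWord, LatticeAux.count_edgeWord]
    rw [hPcnt, hPcnt] at hlat0
    have hcore := LatticeAux.core_edge T hxL hyM hmem hlat0
    have h1 := hucnt (k+1)
    have h2 := hucnt k
    have hocc : LatticeAux.occE T (k+1) (x+1) (y+1) = 1 := by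
      rw [LatticeAux.occE, if_pos hmem]
    omega
  rcases List.append_eq_append_iff.mp hFx with ⟨w', hw1, hw2⟩ | ⟨w', hw1, hw2⟩
  · exact hedge_handler w' v2 hw2 (by rw [hu, hw1])
  · cases w' with
    | nil =>
      have hsplit : LatticeAux.rwE T x = [] ++ (k+1) :: v2 := by simpa using hw2.symm
      have hu2' : u2 = LatticeAux.rwB T x := by simpa using hw1.symm
      exact hedge_handler [] v2 hsplit (by rw [hu, hu2']; simp)
    | cons c w'' =>
      have hc : k + 1 = c ∧ v2 = w'' ++ LatticeAux.rwE T x := by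
        have h5 := hw2
        simp only [List.cons_append, List.cons.injEq] at h5
        exact h5
      exact hbox_handler u2 w'' (by rw [hc.1]; exact hw1) hu
end

section
/- Claim 3.2 (the explicit tableau T⋆): Let λ, μ, ν be partitions and let (r_k^i, r_k^{i+1/2})_{1 ≤ k ≤ ℓ(μ), 1 ≤ i ≤ ℓ(ν)} be integers satisfying conditions (A)–(F) for (λ,μ,ν). Define a filling T⋆ as follows: in row i, for each k, the boxes in columns λ_i + Σ_{k'<k} r_{k'}^i + 1 through λ_i + Σ_{k'≤k} r_{k'}^i receive the label k; and for each i,k, the label k is placed on the edges (i+1/2, j) for j ranging over the r_k^{i+1/2} consecutive columns (λ_i + Σ_{k'<k} r_{k'}^i) − r_k^{i+1/2} + 1 through λ_i + Σ_{k'<k} r_{k'}^i. Then T⋆ is a well-defined edge-labeled tableau of shape ν/λ and content μ, and its row reading word w_r(T⋆) is lattice. -/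
namespace ARY

lemma part_anti (p : SeqPartition) {i j : ℕ} (h1 : 1 ≤ i) (h : i ≤ j) : p.part j ≤ p.part i :=
  p.antitone' (by omega)

lemma part_succ_le (p : SeqPartition) (k : ℕ) : p.part (k + 1) ≤ p.part k :=
  p.antitone' (by omega)

lemma le_len {p : SeqPartition} {i : ℕ} (h : p.part i ≠ 0) : i ≤ p.len := by
  obtain ⟨N, hN⟩ := p.eventually_zero'
  have hfin : {n : ℕ | p.toFun n ≠ 0}.Finite :=
    Set.Finite.subset (Finset.range N).finite_toSet (fun n hn => by
      simp only [Finset.coe_range, Set.mem_Iio]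
      by_contra h'
      exact hn (hN n (by omega)))
  have hsub : ↑(Finset.range i) ⊆ {n : ℕ | p.toFun n ≠ 0} := by
    intro n hn
    simp only [Finset.coe_range, Set.mem_Iio] at hn
    intro h0
    have : p.toFun (i - 1) ≤ p.toFun n := p.antitone' (by omega)
    exact h (by simp only [SeqPartition.part]; omega)
  calc i = (Finset.range i).card := (Finset.card_range i).symm
    _ = (↑(Finset.range i) : Set ℕ).ncard := (Set.ncard_coe_finset _).symm
    _ ≤ _ := Set.ncard_le_ncard hsub hfin

lemma prefix_append_cases {α : Type*} {p x y : List α} (h : p <+: x ++ y) :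
    p <+: x ∨ ∃ q, p = x ++ q ∧ q <+: y := by
  have hp : p = (x ++ y).take p.length := List.prefix_iff_eq_take.mp h
  rw [List.take_append] at hp
  rcases le_or_gt p.length x.length with hl | hl
  · left
    rw [Nat.sub_eq_zero_of_le hl, List.take_zero, List.append_nil] at hp
    exact hp ▸ List.take_prefix _ _
  · right
    rw [List.take_of_length_le (by omega)] at hp
    exact ⟨_, hp, List.take_prefix _ _⟩

lemma prefix_flatMap {α β : Type*} (f : α → List β) :
    ∀ (l : List α) (p : List β), p <+: l.flatMap f →
      ∃ l₁ l₂, l = l₁ ++ l₂ ∧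
        ((l₂ = [] ∧ p = l₁.flatMap f) ∨
          ∃ a t q, l₂ = a :: t ∧ q <+: f a ∧ p = l₁.flatMap f ++ q)
  | [], p, hp => by
      simp only [List.flatMap_nil, List.prefix_nil] at hp
      exact ⟨[], [], rfl, Or.inl ⟨rfl, by simp [hp]⟩⟩
  | a :: l, p, hp => by
      rw [List.flatMap_cons] at hp
      rcases prefix_append_cases hp with h | ⟨q, rfl, hq⟩
      · exact ⟨[], a :: l, rfl, Or.inr ⟨a, l, p, rfl, h, by simp⟩⟩
      · obtain ⟨l₁, l₂, rfl, hcase⟩ := prefix_flatMap f l q hq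
        refine ⟨a :: l₁, l₂, rfl, ?_⟩
        rcases hcase with ⟨h1, h2⟩ | ⟨a', t, q', h1, h2, h3⟩
        · exact Or.inl ⟨h1, by simp [h2]⟩
        · exact Or.inr ⟨a', t, q', h1, h2, by simp [h3]⟩

lemma sum_map_range (g : ℕ → ℕ) (n : ℕ) :
    ((List.range n).map g).sum = ∑ j ∈ Finset.range n, g j := by
  induction n with
  | zero => simp
  | succ n ih =>
      rw [List.range_succ, List.map_append, List.sum_append, Finset.sum_range_succ, ih]
      simp

lemma count_sort (s : Finset ℕ) (m : ℕ) :
    ((s.sort (· ≤ ·)).count m) = if m ∈ s then 1 else 0 := by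
  split
  · next h => exact List.count_eq_one_of_mem (s.sort_nodup _) (by rwa [Finset.mem_sort])
  · next h => exact List.count_eq_zero_of_not_mem (by rwa [Finset.mem_sort])

lemma sorted_prefix_mem (s : Finset ℕ) {p : List ℕ} (hp : p <+: s.sort (· ≤ ·))
    {a b : ℕ} (hab : a < b) (hb : b ∈ p) (ha : a ∈ s) : a ∈ p := by
  obtain ⟨t, ht⟩ := hp
  have hsort := (Finset.sortedLT_sort s).pairwise
  rw [← ht] at hsort
  have ha' : a ∈ p ++ t := by rw [ht]; rwa [Finset.mem_sort]
  rcases List.mem_append.mp ha' with h | h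
  · exact h
  · exfalso
    have := (List.pairwise_append.mp hsort).2.2 b hb a h
    omega


section
variable (lam mu nu : SeqPartition) (rb re : ℕ → ℕ → ℤ)

def cI (i k : ℕ) : ℤ := (lam.part i : ℤ) + ∑ k' ∈ Finset.Icc 1 k, rb k' i

noncomputable def boxF (i j : ℕ) : ℕ :=
  if IsBox lam nu i j then
    1 + ((Finset.Icc 1 mu.len).filter fun k => cI lam rb i k < (j : ℤ)).card
  else 0

noncomputable def edgeF (i j : ℕ) : Finset ℕ :=
  (Finset.Icc 1 mu.len).filter fun k =>
    cI lam rb i (k - 1) - re k i < (j : ℤ) ∧ (j : ℤ) ≤ cI lam rb i (k - 1)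

structure Facts : Prop where
  vanish : ∀ k i, ¬(1 ≤ k ∧ k ≤ mu.len ∧ 1 ≤ i ∧ i ≤ nu.len) → rb k i = 0 ∧ re k i = 0
  nonneg : ∀ k i, 0 ≤ rb k i ∧ 0 ≤ re k i
  hB : ∀ i, 1 ≤ i → cI lam rb i mu.len = (nu.part i : ℤ)
  hC : ∀ k, 1 ≤ k → ∑ i ∈ Finset.Icc 1 nu.len, (rb k i + re k i) = (mu.part k : ℤ)
  hD : ∀ k i, 1 ≤ k → k ≤ mu.len → 1 ≤ i → i ≤ nu.len →
    re k i ≤ cI lam rb i (k - 1) - cI lam rb (i + 1) k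
  hE : ∀ k i, i < k → rb k i = 0 ∧ re k i = 0
  hF : ∀ k i, 1 ≤ k → k ≤ mu.len → 1 ≤ i → i ≤ nu.len →
    rb (k + 1) i + ∑ i' ∈ Finset.Icc 1 (i - 1), (rb (k + 1) i' + re (k + 1) i')
      ≤ ∑ i' ∈ Finset.Icc 1 (i - 1), (rb k i' + re k i')

end

variable {lam mu nu : SeqPartition} {rb re : ℕ → ℕ → ℤ}

section facts
variable (hf : Facts lam mu nu rb re)
include hf

lemma cI_mono (i : ℕ) {k k' : ℕ} (hk : k ≤ k') : cI lam rb i k ≤ cI lam rb i k' := by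
  unfold cI
  have := Finset.sum_le_sum_of_subset_of_nonneg
    (Finset.Icc_subset_Icc_right (a := 1) hk) (fun x _ _ => (hf.nonneg x i).1)
  omega

lemma lam_le_cI (i k : ℕ) : (lam.part i : ℤ) ≤ cI lam rb i k := by
  unfold cI
  have : (0:ℤ) ≤ ∑ k' ∈ Finset.Icc 1 k, rb k' i :=
    Finset.sum_nonneg fun x _ => (hf.nonneg x i).1
  omega

lemma cI_stable (i : ℕ) {k : ℕ} (hk : mu.len ≤ k) : cI lam rb i k = cI lam rb i mu.len := by
  unfold cI
  congr 1
  exact (Finset.sum_subset (Finset.Icc_subset_Icc_right hk) (fun x hx hnx => by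
    refine (hf.vanish x i ?_).1
    simp only [Finset.mem_Icc] at hx hnx
    omega)).symm

lemma cI_le_nu (i : ℕ) (k : ℕ) (hi : 1 ≤ i) : cI lam rb i k ≤ (nu.part i : ℤ) := by
  rw [← hf.hB i hi]
  rcases le_or_gt k mu.len with hk | hk
  · exact cI_mono hf i hk
  · exact le_of_eq (cI_stable hf i hk.le)

omit hf in
lemma cI_succ (i k : ℕ) : cI lam rb i (k + 1) = cI lam rb i k + rb (k + 1) i := by
  unfold cI
  rw [Finset.sum_Icc_succ_top (by omega)]
  ring

lemma cI_nonneg (i k : ℕ) : 0 ≤ cI lam rb i k :=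
  le_trans (by positivity) (lam_le_cI hf i k)

lemma boxF_spec {i j k : ℕ} (hi : 1 ≤ i) (hk : 1 ≤ k) :
    (IsBox lam nu i j ∧ boxF lam mu nu rb i j = k) ↔
      (cI lam rb i (k - 1) < (j : ℤ) ∧ (j : ℤ) ≤ cI lam rb i k) := by
  constructor
  · rintro ⟨hbox, hval⟩
    rw [boxF, if_pos hbox] at hval
    set C := (Finset.Icc 1 mu.len).filter (fun k' => cI lam rb i k' < (j : ℤ)) with hC
    have hcard : C.card = k - 1 := by omega
    have hjnu : (j : ℤ) ≤ (nu.part i : ℤ) := by exact_mod_cast hbox.2.2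
    have h1 : cI lam rb i (k - 1) < (j : ℤ) := by
      rcases Nat.eq_or_lt_of_le hk with h | h
      · have : cI lam rb i 0 = (lam.part i : ℤ) := by simp [cI]
        rw [← h]
        simp only [Nat.sub_self, this]
        exact_mod_cast hbox.2.1
      · by_contra hcon
        push_neg at hcon
        have hsub : C ⊆ Finset.Icc 1 (k - 2) := by
          intro x hx
          simp only [hC, Finset.mem_filter, Finset.mem_Icc] at hx
          simp only [Finset.mem_Icc]
          refine ⟨hx.1.1, ?_⟩
          by_contra hxk
          have : cI lam rb i (k - 1) ≤ cI lam rb i x := cI_mono hf i (by omega)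
          omega
        have := Finset.card_le_card hsub
        rw [hcard, Nat.card_Icc] at this
        omega
    refine ⟨h1, ?_⟩
    by_contra hcon
    push_neg at hcon
    rcases le_or_gt k mu.len with hkl | hkl
    · have hsub : Finset.Icc 1 k ⊆ C := by
        intro x hx
        simp only [Finset.mem_Icc] at hx
        simp only [hC, Finset.mem_filter, Finset.mem_Icc]
        exact ⟨⟨hx.1, le_trans hx.2 hkl⟩, lt_of_le_of_lt (cI_mono hf i hx.2) hcon⟩
      have := Finset.card_le_card hsub
      rw [hcard, Nat.card_Icc] at this
      omega
    · have := cI_stable hf i (k := k) (by omega)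
      have := hf.hB i hi
      omega
  · rintro ⟨h1, h2⟩
    have hlam : (lam.part i : ℤ) ≤ cI lam rb i (k - 1) := lam_le_cI hf i _
    have hbox : IsBox lam nu i j := by
      refine ⟨hi, by exact_mod_cast lt_of_le_of_lt hlam h1, ?_⟩
      have := cI_le_nu hf i k hi
      exact_mod_cast le_trans h2 this
    have hkmu : k ≤ mu.len := by
      by_contra hcon
      have e1 := cI_stable hf i (k := k) (by omega)
      have e2 := cI_stable hf i (k := k - 1) (by omega)
      omega
    refine ⟨hbox, ?_⟩
    rw [boxF, if_pos hbox]
    have : (Finset.Icc 1 mu.len).filter (fun k' => cI lam rb i k' < (j : ℤ))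
        = Finset.Icc 1 (k - 1) := by
      ext x
      simp only [Finset.mem_filter, Finset.mem_Icc]
      constructor
      · rintro ⟨⟨hx1, hx2⟩, hx3⟩
        refine ⟨hx1, ?_⟩
        by_contra hxk
        exact absurd (lt_of_le_of_lt (le_trans h2 (cI_mono hf i (by omega))) hx3) (lt_irrefl _)
      · rintro ⟨hx1, hx2⟩
        exact ⟨⟨hx1, by omega⟩, lt_of_le_of_lt (cI_mono hf i hx2) h1⟩
    rw [this, Nat.card_Icc]
    omega

lemma edgeF_spec (i : ℕ) {j k : ℕ} (hk : 1 ≤ k) :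
    k ∈ edgeF lam mu rb re i j ↔
      (cI lam rb i (k - 1) - re k i < (j : ℤ) ∧ (j : ℤ) ≤ cI lam rb i (k - 1)) := by
  constructor
  · intro hm
    exact (Finset.mem_filter.mp hm).2
  · rintro ⟨h1, h2⟩
    have hkmu : k ≤ mu.len := by
      by_contra hcon
      have := (hf.vanish k i (by omega)).2
      omega
    exact Finset.mem_filter.mpr ⟨Finset.mem_Icc.mpr ⟨hk, hkmu⟩, h1, h2⟩

lemma edge_mem_facts {i j k : ℕ} (hm : k ∈ edgeF lam mu rb re i j) :
    1 ≤ k ∧ k ≤ mu.len ∧ 1 ≤ i ∧ i ≤ nu.len ∧ k ≤ i ∧ 0 < re k i := by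
  obtain ⟨hicc, h1, h2⟩ := Finset.mem_filter.mp hm
  simp only [Finset.mem_Icc] at hicc
  have hre : 0 < re k i := by omega
  have hiv : 1 ≤ i ∧ i ≤ nu.len := by
    by_contra hcon
    have := (hf.vanish k i (by tauto)).2
    omega
  have hki : k ≤ i := by
    by_contra hcon
    have := (hf.hE k i (by omega)).2
    omega
  exact ⟨hicc.1, hicc.2, hiv.1, hiv.2, hki, hre⟩

lemma edge_lo_nonneg (i k : ℕ) (hi : 1 ≤ i) (hk : 1 ≤ k) :
    (lam.part (i + 1) : ℤ) ≤ cI lam rb i (k - 1) - re k i := by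
  rcases eq_or_lt_of_le (hf.nonneg k i).2 with h | h
  · have h1 : (lam.part (i+1) : ℤ) ≤ (lam.part i : ℤ) := by
      exact_mod_cast part_anti lam hi (by omega)
    have := lam_le_cI hf i (k - 1)
    omega
  · have hv : k ≤ mu.len ∧ i ≤ nu.len := by
      by_contra hcon
      have := (hf.vanish k i (by tauto)).2
      omega
    have := hf.hD k i hk hv.1 hi hv.2
    have := lam_le_cI hf (i + 1) k
    omega

end facts


section facts2
variable (hf : Facts lam mu nu rb re)
include hf

lemma le_mulen_of_interval {i j k : ℕ} (hk : 1 ≤ k)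
    (h1 : cI lam rb i (k - 1) < (j : ℤ)) (h2 : (j : ℤ) ≤ cI lam rb i k) : k ≤ mu.len := by
  by_contra hcon
  have e1 := cI_stable hf i (k := k) (by omega)
  have e2 := cI_stable hf i (k := k - 1) (by omega)
  omega

lemma boxF_eq_iff {k : ℕ} (hk : 1 ≤ k) (i j : ℕ) :
    boxF lam mu nu rb i j = k ↔
      (1 ≤ i ∧ cI lam rb i (k - 1) < (j : ℤ) ∧ (j : ℤ) ≤ cI lam rb i k) := by
  constructor
  · intro hv
    have hb : IsBox lam nu i j := by
      by_contra hcon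
      rw [boxF, if_neg hcon] at hv
      omega
    exact ⟨hb.1, (boxF_spec hf hb.1 hk).mp ⟨hb, hv⟩⟩
  · rintro ⟨hi, hint⟩
    exact ((boxF_spec hf hi hk).mpr hint).2

lemma subset_lemma : SeqPartition.Subset lam nu := by
  have key : ∀ m, 1 ≤ m → lam.part m ≤ nu.part m := by
    intro m hm
    have h1 := lam_le_cI hf (rb := rb) m 0
    have h2 := cI_le_nu hf m 0 hm
    exact_mod_cast le_trans h1 h2
  intro i
  cases i with
  | zero => exact key 1 le_rfl
  | succ n => exact key (n + 1) (by omega)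

omit hf in
lemma box_lt_len {i j : ℕ} (hb : IsBox lam nu i j) : i ≤ nu.len := by
  refine le_len (p := nu) ?_
  have := hb.2.2
  have := hb.2.1
  omega

end facts2

lemma facts_of (h : SatisfiesAF lam mu nu (fun k i => (rb k i : ℝ)) (fun k i => (re k i : ℝ))) :
    Facts lam mu nu rb re := by
  obtain ⟨h0, hA, hB, hC, hD, hE, hF⟩ := h
  have hIco : ∀ n : ℕ, 1 ≤ n → Finset.Ico 1 n = Finset.Icc 1 (n - 1) := by
    intro n hn
    rw [← Finset.Ico_add_one_right_eq_Icc]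
    congr 1
    omega
  constructor
  · intro k i hcon
    obtain ⟨e1, e2⟩ := h0 k i hcon
    simp only [] at e1 e2
    exact ⟨by exact_mod_cast e1, by exact_mod_cast e2⟩
  · intro k i
    obtain ⟨e1, e2⟩ := hA k i
    simp only [] at e1 e2
    exact ⟨by exact_mod_cast e1, by exact_mod_cast e2⟩
  · intro i hi
    have h := hB i hi
    simp only [] at h
    simp only [cI]
    exact_mod_cast h
  · intro k hk
    have h := hC k hk
    simp only [] at h
    exact_mod_cast h
  · intro k i h1 h2 h3 h4
    have h := hD k i h1 h2 h3 h4
    simp only [] at h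
    rw [hIco k h1] at h
    simp only [cI]
    exact_mod_cast h
  · intro k i hik
    obtain ⟨e1, e2⟩ := hE k i hik
    simp only [] at e1 e2
    exact ⟨by exact_mod_cast e1, by exact_mod_cast e2⟩
  · intro k i h1 h2 h3 h4
    have h := hF k i h1 h2 h3 h4
    simp only [] at h
    rw [hIco i h3] at h
    exact_mod_cast h

lemma card_filter_Icc_interval (n : ℕ) (lo hi : ℤ) (hlo : 0 ≤ lo) :
    ((Finset.Icc 1 n).filter fun j : ℕ => lo < (j : ℤ) ∧ (j : ℤ) ≤ hi).card
      = (min hi (n : ℤ) - lo).toNat := by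
  have hset : ((Finset.Icc 1 n).filter fun j : ℕ => lo < (j : ℤ) ∧ (j : ℤ) ≤ hi)
      = Finset.Icc (lo.toNat + 1) (min n hi.toNat) := by
    ext x
    simp only [Finset.mem_filter, Finset.mem_Icc, le_min_iff]
    omega
  rw [hset, Nat.card_Icc]
  omega

lemma card_filter_Ico_interval (c n : ℕ) (lo hi : ℤ) (hlo : 0 ≤ lo) :
    ((Finset.Ico c n).filter fun j0 : ℕ => lo < (j0 : ℤ) + 1 ∧ (j0 : ℤ) + 1 ≤ hi).card
      = (min hi (n : ℤ) - max (c : ℤ) lo).toNat := by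
  have hset : ((Finset.Ico c n).filter fun j0 : ℕ => lo < (j0 : ℤ) + 1 ∧ (j0 : ℤ) + 1 ≤ hi)
      = Finset.Ico (max c lo.toNat) (min n hi.toNat) := by
    ext x
    simp only [Finset.mem_filter, Finset.mem_Ico, max_le_iff, lt_min_iff]
    omega
  rw [hset, Nat.card_Ico]
  omega

lemma card_filter_product (s t : Finset ℕ) (P : ℕ → ℕ → Prop) [∀ i j : ℕ, Decidable (P i j)] :
    ((s ×ˢ t).filter fun q => P q.1 q.2).card = ∑ i ∈ s, (t.filter fun j => P i j).card := by
  simp only [Finset.card_filter, Finset.sum_product]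

section fields
variable (hf : Facts lam mu nu rb re)
include hf

lemma edgeF_eq_empty {i j : ℕ} (hne : ¬ IsEdge lam nu i j) :
    edgeF lam mu rb re i j = ∅ := by
  rw [Finset.eq_empty_iff_forall_notMem]
  intro k hk
  obtain ⟨hk1, hkmu, hi1, hinl, hki, hre⟩ := edge_mem_facts hf hk
  obtain ⟨h1, h2⟩ := (edgeF_spec hf i hk1).mp hk
  have hlo := edge_lo_nonneg hf i k hi1 hk1
  have hnu := cI_le_nu hf i (k - 1) hi1
  refine hne ⟨hi1, by omega, ?_, ?_⟩
  · exact_mod_cast le_trans h2 hnu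
  · omega

omit hf in
lemma row_weak_lemma (i j : ℕ) (h1 : IsBox lam nu i j) (h2 : IsBox lam nu i (j + 1)) :
    boxF lam mu nu rb i j ≤ boxF lam mu nu rb i (j + 1) := by
  rw [boxF, if_pos h1, boxF, if_pos h2]
  have hsub : (Finset.Icc 1 mu.len).filter (fun k => cI lam rb i k < (j : ℤ))
      ⊆ (Finset.Icc 1 mu.len).filter (fun k => cI lam rb i k < ((j + 1 : ℕ) : ℤ)) := by
    intro x hx
    simp only [Finset.mem_filter] at hx ⊢
    refine ⟨hx.1, ?_⟩
    have := hx.2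
    push_cast
    omega
  have := Finset.card_le_card hsub
  omega

omit hf in
lemma boxF_pos {i j : ℕ} (h1 : IsBox lam nu i j) : 1 ≤ boxF lam mu nu rb i j := by
  rw [boxF, if_pos h1]
  omega

lemma col_strict_lemma (i j : ℕ) (h1 : IsBox lam nu i j) (h2 : IsBox lam nu (i + 1) j) :
    boxF lam mu nu rb i j < boxF lam mu nu rb (i + 1) j := by
  set m := boxF lam mu nu rb i j with hm
  set m' := boxF lam mu nu rb (i + 1) j with hm'
  have hm1 : 1 ≤ m := boxF_pos h1
  have hm'1 : 1 ≤ m' := boxF_pos h2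
  obtain ⟨hs1, hs2⟩ := (boxF_spec hf h1.1 hm1).mp ⟨h1, rfl⟩
  obtain ⟨hs3, hs4⟩ := (boxF_spec hf h2.1 hm'1).mp ⟨h2, rfl⟩
  by_contra hcon
  push_neg at hcon
  have hmono : cI lam rb (i + 1) m' ≤ cI lam rb (i + 1) m := cI_mono hf (i + 1) hcon
  have hkmu : m ≤ mu.len := le_mulen_of_interval hf hm1 hs1 hs2
  have hinl : i ≤ nu.len := by
    have := box_lt_len (lam := lam) h2
    omega
  have hd := hf.hD m i hm1 hkmu h1.1 hinl
  have := (hf.nonneg m i).2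
  omega

lemma edge_gt_lemma (i j : ℕ) (hb : IsBox lam nu i j) {e : ℕ}
    (he : e ∈ edgeF lam mu rb re i j) : boxF lam mu nu rb i j < e := by
  set m := boxF lam mu nu rb i j with hm
  have hm1 : 1 ≤ m := boxF_pos hb
  obtain ⟨hs1, hs2⟩ := (boxF_spec hf hb.1 hm1).mp ⟨hb, rfl⟩
  obtain ⟨he1, _, _, _, _, _⟩ := edge_mem_facts hf he
  obtain ⟨ht1, ht2⟩ := (edgeF_spec hf i he1).mp he
  by_contra hcon
  push_neg at hcon
  have : cI lam rb i (e - 1) ≤ cI lam rb i (m - 1) := cI_mono hf i (by omega)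
  omega

lemma edge_lt_lemma (i j : ℕ) (hb : IsBox lam nu (i + 1) j) {e : ℕ}
    (he : e ∈ edgeF lam mu rb re i j) : e < boxF lam mu nu rb (i + 1) j := by
  set m' := boxF lam mu nu rb (i + 1) j with hm'
  have hm'1 : 1 ≤ m' := boxF_pos hb
  obtain ⟨hs1, hs2⟩ := (boxF_spec hf hb.1 hm'1).mp ⟨hb, rfl⟩
  obtain ⟨he1, hemu, hi1, hinl, _, hre⟩ := edge_mem_facts hf he
  obtain ⟨ht1, ht2⟩ := (edgeF_spec hf i he1).mp he
  have hd := hf.hD e i he1 hemu hi1 hinl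
  by_contra hcon
  push_neg at hcon
  have : cI lam rb (i + 1) m' ≤ cI lam rb (i + 1) e := cI_mono hf (i + 1) hcon
  omega

lemma cI_pred_add (i k : ℕ) (hk : 1 ≤ k) :
    cI lam rb i k = cI lam rb i (k - 1) + rb k i := by
  have h := cI_succ (lam := lam) (rb := rb) i (k - 1)
  have hkk : k - 1 + 1 = k := by omega
  rw [hkk] at h
  exact h

lemma rowB_card (k i : ℕ) (hk : 1 ≤ k) (hi : 1 ≤ i) :
    ((Finset.Icc 1 (nu.part 1)).filter fun j => boxF lam mu nu rb i j = k).card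
      = (rb k i).toNat := by
  have hcong : ∀ j ∈ Finset.Icc 1 (nu.part 1),
      (boxF lam mu nu rb i j = k ↔ (cI lam rb i (k - 1) < (j : ℤ) ∧ (j : ℤ) ≤ cI lam rb i k)) := by
    intro j _
    rw [boxF_eq_iff hf hk i j]
    constructor
    · rintro ⟨_, h⟩; exact h
    · intro h; exact ⟨hi, h⟩
  rw [Finset.filter_congr hcong, card_filter_Icc_interval _ _ _ (cI_nonneg hf i (k - 1))]
  have h1 : cI lam rb i k ≤ ((nu.part 1 : ℕ) : ℤ) := by
    refine le_trans (cI_le_nu hf i k hi) ?_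
    exact_mod_cast part_anti nu le_rfl hi
  have h2 := cI_pred_add hf i k hk
  have h3 := (hf.nonneg k i).1
  omega

lemma rowE_card (k i : ℕ) (hk : 1 ≤ k) (hi : 1 ≤ i) :
    ((Finset.Icc 1 (nu.part 1)).filter fun j => k ∈ edgeF lam mu rb re i j).card
      = (re k i).toNat := by
  have hlo : (0 : ℤ) ≤ cI lam rb i (k - 1) - re k i := by
    have := edge_lo_nonneg hf i k hi hk
    have : (0 : ℤ) ≤ (lam.part (i + 1) : ℤ) := by positivity
    omega
  have hcong : ∀ j ∈ Finset.Icc 1 (nu.part 1),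
      (k ∈ edgeF lam mu rb re i j ↔
        (cI lam rb i (k - 1) - re k i < (j : ℤ) ∧ (j : ℤ) ≤ cI lam rb i (k - 1))) := by
    intro j _
    exact edgeF_spec hf i hk
  rw [Finset.filter_congr hcong, card_filter_Icc_interval _ _ _ hlo]
  have h1 : cI lam rb i (k - 1) ≤ ((nu.part 1 : ℕ) : ℤ) := by
    refine le_trans (cI_le_nu hf i (k - 1) hi) ?_
    exact_mod_cast part_anti nu le_rfl hi
  have h3 := (hf.nonneg k i).2
  omega

lemma content_lemma (k : ℕ) (hk : 1 ≤ k) :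
    Set.ncard {q : ℕ × ℕ | boxF lam mu nu rb q.1 q.2 = k}
      + Set.ncard {q : ℕ × ℕ | k ∈ edgeF lam mu rb re q.1 q.2} = mu.part k := by
  classical
  have hBset : {q : ℕ × ℕ | boxF lam mu nu rb q.1 q.2 = k}
      = ↑((Finset.Icc 1 nu.len ×ˢ Finset.Icc 1 (nu.part 1)).filter
          fun q => boxF lam mu nu rb q.1 q.2 = k) := by
    ext ⟨i, j⟩
    simp only [Set.mem_setOf_eq, Finset.coe_filter, Finset.mem_product, Finset.mem_Icc,
      Set.mem_setOf_eq]
    constructor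
    · intro hv
      obtain ⟨hi, hint1, hint2⟩ := (boxF_eq_iff hf hk i j).mp hv
      have hb : IsBox lam nu i j := ((boxF_spec hf hi hk).mpr ⟨hint1, hint2⟩).1
      have hjn : j ≤ nu.part 1 := le_trans hb.2.2 (part_anti nu le_rfl hi)
      have hj1 : 1 ≤ j := by
        have := hb.2.1
        omega
      exact ⟨⟨⟨hi, box_lt_len (lam := lam) hb⟩, hj1, hjn⟩, hv⟩
    · exact fun hv => hv.2
  have hEset : {q : ℕ × ℕ | k ∈ edgeF lam mu rb re q.1 q.2}
      = ↑((Finset.Icc 1 nu.len ×ˢ Finset.Icc 1 (nu.part 1)).filter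
          fun q => k ∈ edgeF lam mu rb re q.1 q.2) := by
    ext ⟨i, j⟩
    simp only [Set.mem_setOf_eq, Finset.coe_filter, Finset.mem_product, Finset.mem_Icc,
      Set.mem_setOf_eq]
    constructor
    · intro hv
      obtain ⟨hk1, hkmu, hi1, hinl, hki, hre⟩ := edge_mem_facts hf hv
      obtain ⟨h1, h2⟩ := (edgeF_spec hf i hk1).mp hv
      have hlo := edge_lo_nonneg hf i k hi1 hk1
      have hnu : cI lam rb i (k - 1) ≤ ((nu.part 1 : ℕ) : ℤ) := by
        refine le_trans (cI_le_nu hf i (k - 1) hi1) ?_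
        exact_mod_cast part_anti nu le_rfl hi1
      exact ⟨⟨⟨hi1, hinl⟩, by omega, by exact_mod_cast le_trans h2 hnu⟩, hv⟩
    · exact fun hv => hv.2
  rw [hBset, hEset, Set.ncard_coe_finset, Set.ncard_coe_finset,
    card_filter_product _ _ (fun i j => boxF lam mu nu rb i j = k),
    card_filter_product _ _ (fun i j => k ∈ edgeF lam mu rb re i j)]
  have hsum : ∀ i ∈ Finset.Icc 1 nu.len,
      ((Finset.Icc 1 (nu.part 1)).filter fun j => boxF lam mu nu rb i j = k).card
        + ((Finset.Icc 1 (nu.part 1)).filter fun j => k ∈ edgeF lam mu rb re i j).card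
      = (rb k i).toNat + (re k i).toNat := by
    intro i hi
    simp only [Finset.mem_Icc] at hi
    rw [rowB_card hf k i hk hi.1, rowE_card hf k i hk hi.1]
  rw [← Finset.sum_add_distrib, Finset.sum_congr rfl hsum]
  have hcast : ((∑ i ∈ Finset.Icc 1 nu.len, ((rb k i).toNat + (re k i).toNat) : ℕ) : ℤ)
      = (mu.part k : ℤ) := by
    push_cast
    rw [← hf.hC k hk]
    refine Finset.sum_congr rfl fun i _ => ?_
    rw [Int.toNat_of_nonneg (hf.nonneg k i).1, Int.toNat_of_nonneg (hf.nonneg k i).2]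
  exact_mod_cast hcast

end fields

noncomputable def rowB (lam mu nu : SeqPartition) (rb : ℕ → ℕ → ℤ) (i : ℕ) : List ℕ :=
  ((List.range (nu.part 1)).reverse).flatMap fun j0 =>
    if IsBox lam nu i (j0 + 1) then [boxF lam mu nu rb i (j0 + 1)] else []

noncomputable def rowE (lam mu nu : SeqPartition) (rb re : ℕ → ℕ → ℤ) (i : ℕ) : List ℕ :=
  ((List.range (nu.part 1)).reverse).flatMap fun j0 =>
    (edgeF lam mu rb re i (j0 + 1)).sort (· ≤ ·)

def SN (rb re : ℕ → ℕ → ℤ) (m n : ℕ) : ℕ :=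
  ∑ i0 ∈ Finset.range n, ((rb m (i0 + 1)).toNat + (re m (i0 + 1)).toNat)

noncomputable def ECard (lam mu : SeqPartition) (rb re : ℕ → ℕ → ℤ) (n1 i m J : ℕ) : ℕ :=
  ((Finset.Ico J n1).filter fun j0 => m ∈ edgeF lam mu rb re i (j0 + 1)).card

lemma sum_map_drop_range (g : ℕ → ℕ) (c n : ℕ) :
    (((List.range n).drop c).map g).sum = ∑ j0 ∈ Finset.Ico c n, g j0 := by
  rcases le_or_gt c n with hc | hc
  · have hsplit := List.take_append_drop c (List.range n)
    have h1 : ((List.range n).map g).sum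
        = (((List.range n).take c).map g).sum + (((List.range n).drop c).map g).sum := by
      conv_lhs => rw [← hsplit]
      rw [List.map_append, List.sum_append]
    rw [List.take_range, min_eq_left hc] at h1
    rw [sum_map_range, sum_map_range] at h1
    have h2 : ∑ j0 ∈ Finset.range c, g j0 + ∑ j0 ∈ Finset.Ico c n, g j0
        = ∑ j0 ∈ Finset.range n, g j0 := by
      rw [Finset.range_eq_Ico, Finset.range_eq_Ico]
      exact Finset.sum_Ico_consecutive g (Nat.zero_le c) hc
    omega
  · rw [List.drop_of_length_le (by simpa using hc.le), Finset.Ico_eq_empty (by omega)]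
    simp

section counting
variable (hf : Facts lam mu nu rb re)
include hf

lemma SN_eq (m n : ℕ) : ((SN rb re m n : ℕ) : ℤ) = ∑ i ∈ Finset.Icc 1 n, (rb m i + re m i) := by
  rw [SN]
  push_cast
  rw [← Finset.Ico_add_one_right_eq_Icc, Finset.sum_Ico_eq_sum_range]
  refine Finset.sum_congr (by norm_num) fun x _ => ?_
  rw [Int.toNat_of_nonneg (hf.nonneg m (x + 1)).1, Int.toNat_of_nonneg (hf.nonneg m (x + 1)).2]
  have hx : 1 + x = x + 1 := Nat.add_comm 1 x
  rw [hx]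

omit hf in
lemma SN_succ' (m n : ℕ) : SN rb re m (n + 1)
    = SN rb re m n + ((rb m (n + 1)).toNat + (re m (n + 1)).toNat) :=
  Finset.sum_range_succ _ _

lemma hFnat (k i : ℕ) (hk : 1 ≤ k) (hi : 1 ≤ i) (hin : i ≤ nu.len) :
    SN rb re (k + 1) (i - 1) + (rb (k + 1) i).toNat ≤ SN rb re k (i - 1) := by
  rcases le_or_gt k mu.len with hkm | hkm
  · have hF := hf.hF k i hk hkm hi hin
    have e1 := SN_eq hf (k + 1) (i - 1)
    have e2 := SN_eq hf k (i - 1)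
    have e3 := (hf.nonneg (k + 1) i).1
    omega
  · have h1 : SN rb re (k + 1) (i - 1) = 0 := by
      rw [SN]
      refine Finset.sum_eq_zero fun x _ => ?_
      have := (hf.vanish (k + 1) (x + 1) (by omega)).1
      have := (hf.vanish (k + 1) (x + 1) (by omega)).2
      omega
    have h2 : rb (k + 1) i = 0 := (hf.vanish (k + 1) i (by omega)).1
    omega

lemma SN_stable (m n : ℕ) (hn : nu.len ≤ n) : SN rb re m n = SN rb re m nu.len := by
  rw [SN, SN]
  refine (Finset.sum_subset (Finset.range_subset_range.mpr hn) fun x _ hx => ?_).symm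
  simp only [Finset.mem_range, not_lt] at hx
  have := (hf.vanish m (x + 1) (by omega)).1
  have := (hf.vanish m (x + 1) (by omega)).2
  omega

lemma SN_le (k : ℕ) (hk : 1 ≤ k) (n : ℕ) : SN rb re (k + 1) n ≤ SN rb re k n := by
  rcases lt_or_ge n nu.len with hn | hn
  · have := hFnat hf k (n + 1) hk (by omega) (by omega)
    simp only [Nat.add_sub_cancel] at this
    omega
  · rw [SN_stable hf _ _ hn, SN_stable hf _ _ hn]
    have e1 := SN_eq hf (k + 1) nu.len
    have e2 := SN_eq hf k nu.len
    have h1 := hf.hC k hk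
    have h2 := hf.hC (k + 1) (by omega)
    have h3 : mu.part (k + 1) ≤ mu.part k := part_succ_le mu k
    omega

lemma count_rowB (m i : ℕ) (hm : 1 ≤ m) (hi : 1 ≤ i) :
    (rowB lam mu nu rb i).count m = (rb m i).toNat := by
  rw [rowB, List.count_flatMap, List.map_reverse, List.sum_reverse, sum_map_range]
  have hpt : ∀ j0 : ℕ,
      ((if IsBox lam nu i (j0 + 1) then [boxF lam mu nu rb i (j0 + 1)] else []).count m)
        = if boxF lam mu nu rb i (j0 + 1) = m then 1 else 0 := by
    intro j0
    by_cases hb : IsBox lam nu i (j0 + 1)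
    · rw [if_pos hb]
      by_cases he : boxF lam mu nu rb i (j0 + 1) = m
      · rw [if_pos he, he]
        simp
      · rw [if_neg he, List.count_eq_zero]
        simp only [List.mem_singleton]
        exact fun hh => he hh.symm
    · rw [if_neg hb]
      have h0 : boxF lam mu nu rb i (j0 + 1) = 0 := by rw [boxF, if_neg hb]
      rw [if_neg (by omega)]
      rfl
  have hsum : ∑ j0 ∈ Finset.range (nu.part 1), (Function.comp (List.count m)
      (fun j0 => if IsBox lam nu i (j0 + 1) then [boxF lam mu nu rb i (j0 + 1)] else [])) j0
      = ((Finset.range (nu.part 1)).filter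
          fun j0 => boxF lam mu nu rb i (j0 + 1) = m).card := by
    rw [Finset.card_filter]
    exact Finset.sum_congr rfl fun j0 _ => hpt j0
  rw [hsum]
  have hcong : ∀ j0 ∈ Finset.range (nu.part 1),
      (boxF lam mu nu rb i (j0 + 1) = m ↔
        (cI lam rb i (m - 1) < (j0 : ℤ) + 1 ∧ (j0 : ℤ) + 1 ≤ cI lam rb i m)) := by
    intro j0 _
    rw [boxF_eq_iff hf hm i (j0 + 1)]
    constructor
    · rintro ⟨_, h1, h2⟩
      constructor <;> [exact_mod_cast h1; exact_mod_cast h2]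
    · rintro ⟨h1, h2⟩
      exact ⟨hi, by exact_mod_cast h1, by exact_mod_cast h2⟩
  rw [Finset.filter_congr hcong, Finset.range_eq_Ico,
    card_filter_Ico_interval _ _ _ _ (cI_nonneg hf i (m - 1))]
  have h1 : cI lam rb i m ≤ ((nu.part 1 : ℕ) : ℤ) := by
    refine le_trans (cI_le_nu hf i m hi) ?_
    exact_mod_cast part_anti nu le_rfl hi
  have h2 := cI_pred_add hf i m hm
  have h3 := (hf.nonneg m i).1
  have h4 := cI_nonneg hf i (m - 1)
  omega

lemma ECard_formula (m i J : ℕ) (hm : 1 ≤ m) (hi : 1 ≤ i) :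
    ECard lam mu rb re (nu.part 1) i m J
      = (min (cI lam rb i (m - 1)) ((nu.part 1 : ℕ) : ℤ)
          - max (J : ℤ) (cI lam rb i (m - 1) - re m i)).toNat := by
  have hlam : (0 : ℤ) ≤ (lam.part (i + 1) : ℤ) := by positivity
  have hlo : (0 : ℤ) ≤ cI lam rb i (m - 1) - re m i := by
    have := edge_lo_nonneg hf i m hi hm
    omega
  rw [ECard]
  have hcong : ∀ j0 ∈ Finset.Ico J (nu.part 1),
      (m ∈ edgeF lam mu rb re i (j0 + 1) ↔
        (cI lam rb i (m - 1) - re m i < (j0 : ℤ) + 1 ∧ (j0 : ℤ) + 1 ≤ cI lam rb i (m - 1))) := by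
    intro j0 _
    rw [edgeF_spec hf i hm]
    constructor
    · rintro ⟨h1, h2⟩
      constructor <;> [exact_mod_cast h1; exact_mod_cast h2]
    · rintro ⟨h1, h2⟩
      constructor <;> [exact_mod_cast h1; exact_mod_cast h2]
  rw [Finset.filter_congr hcong, card_filter_Ico_interval _ _ _ _ hlo]

lemma count_rowE (m i : ℕ) (hm : 1 ≤ m) (hi : 1 ≤ i) :
    (rowE lam mu nu rb re i).count m = (re m i).toNat := by
  have hstep : (rowE lam mu nu rb re i).count m = ECard lam mu rb re (nu.part 1) i m 0 := by
    rw [rowE, List.count_flatMap, List.map_reverse, List.sum_reverse, sum_map_range, ECard,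
      Finset.card_filter, Finset.range_eq_Ico]
    refine Finset.sum_congr rfl fun j0 _ => ?_
    simp only [Function.comp]
    rw [count_sort]
  rw [hstep, ECard_formula hf m i 0 hm hi]
  have h1 : cI lam rb i (m - 1) ≤ ((nu.part 1 : ℕ) : ℤ) := by
    refine le_trans (cI_le_nu hf i (m - 1) hi) ?_
    exact_mod_cast part_anti nu le_rfl hi
  have hlam : (0 : ℤ) ≤ (lam.part (i + 1) : ℤ) := by positivity
  have hlo := edge_lo_nonneg hf i m hi hm
  have h3 := (hf.nonneg m i).2
  omega

lemma ECard_key (k i J : ℕ) (hk : 1 ≤ k) (hi : 1 ≤ i) (hin : i ≤ nu.len) :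
    ECard lam mu rb re (nu.part 1) i (k + 1) J + (SN rb re (k + 1) (i - 1) + (rb (k + 1) i).toNat)
      ≤ ECard lam mu rb re (nu.part 1) i k J + (SN rb re k (i - 1) + (rb k i).toNat) := by
  have e1 := ECard_formula hf (k + 1) i J (by omega) hi
  simp only [Nat.add_sub_cancel] at e1
  have e0 := ECard_formula hf k i J hk hi
  have hgap := hFnat hf k i hk hi hin
  have hmu := SN_le hf k hk i
  have hs1 := SN_succ' (rb := rb) (re := re) (k + 1) (i - 1)
  have hs0 := SN_succ' (rb := rb) (re := re) k (i - 1)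
  rw [show i - 1 + 1 = i by omega] at hs1 hs0
  have hc1 := cI_pred_add hf i (k + 1) (by omega)
  simp only [Nat.add_sub_cancel] at hc1
  have hc0 := cI_pred_add hf i k hk
  have hhi0 : cI lam rb i (k - 1) ≤ ((nu.part 1 : ℕ) : ℤ) := by
    refine le_trans (cI_le_nu hf i (k - 1) hi) ?_
    exact_mod_cast part_anti nu le_rfl hi
  have hhi1 : cI lam rb i k ≤ ((nu.part 1 : ℕ) : ℤ) := by
    refine le_trans (cI_le_nu hf i k hi) ?_
    exact_mod_cast part_anti nu le_rfl hi
  have hlam : (0 : ℤ) ≤ (lam.part (i + 1) : ℤ) := by positivity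
  have hlo0' := edge_lo_nonneg hf i k hi hk
  have hlo1' := edge_lo_nonneg hf i (k + 1) hi (by omega)
  simp only [Nat.add_sub_cancel] at hlo1'
  have hn1 := (hf.nonneg k i).1
  have hn2 := (hf.nonneg k i).2
  have hn3 := (hf.nonneg (k + 1) i).1
  have hn4 := (hf.nonneg (k + 1) i).2
  omega

lemma prefix_rowE_counts (i k : ℕ) (hk : 1 ≤ k) (hi : 1 ≤ i) {q : List ℕ}
    (hq : q <+: rowE lam mu nu rb re i) :
    ∃ J : ℕ, q.count (k + 1) ≤ ECard lam mu rb re (nu.part 1) i (k + 1) J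
      ∧ ECard lam mu rb re (nu.part 1) i k J ≤ q.count k := by
  obtain ⟨l₁, l₂, hl, hcase⟩ :=
    prefix_flatMap (fun j0 => (edgeF lam mu rb re i (j0 + 1)).sort (· ≤ ·)) _ q hq
  have hlen : l₁.length + l₂.length = nu.part 1 := by
    have := congrArg List.length hl
    simp at this
    omega
  set c := l₂.length with hcdef
  have hc : c ≤ nu.part 1 := by omega
  have hrev : l₂.reverse ++ l₁.reverse = List.range (nu.part 1) := by
    rw [← List.reverse_append, ← hl, List.reverse_reverse]
  have hl₁r : l₁.reverse = (List.range (nu.part 1)).drop c := by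
    rw [← hrev, List.drop_left' (by simp [hcdef])]
  have hcount : ∀ m, (l₁.flatMap fun j0 => (edgeF lam mu rb re i (j0 + 1)).sort (· ≤ ·)).count m
      = ECard lam mu rb re (nu.part 1) i m c := by
    intro m
    rw [List.count_flatMap]
    have hrv : (List.map (Function.comp (List.count m)
          (fun j0 => (edgeF lam mu rb re i (j0 + 1)).sort (· ≤ ·))) l₁).sum
        = (List.map (Function.comp (List.count m)
          (fun j0 => (edgeF lam mu rb re i (j0 + 1)).sort (· ≤ ·))) l₁.reverse).sum := by
      rw [List.map_reverse, List.sum_reverse]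
    rw [hrv, hl₁r, sum_map_drop_range, ECard, Finset.card_filter]
    refine Finset.sum_congr rfl fun j0 _ => ?_
    simp only [Function.comp]
    rw [count_sort]
  rcases hcase with ⟨h2, hqeq⟩ | ⟨a, t, q', h2, hq', hqeq⟩
  · refine ⟨c, ?_, ?_⟩
    · rw [hqeq, hcount]
    · rw [hqeq, hcount]
  · have hc1 : 1 ≤ c := by rw [hcdef, h2]; simp
    have hct : c = t.length + 1 := by rw [hcdef, h2]; simp
    have h3 : t.reverse ++ [a] = List.range (t.length + 1) := by
      have e : (t.reverse ++ [a]) ++ l₁.reverse = List.range (nu.part 1) := by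
        rw [← hrev, h2]
        simp
      have e2 := congrArg (List.take (t.length + 1)) e
      rw [List.take_left' (by simp)] at e2
      rw [e2, List.take_range]
      congr 1
      omega
    rw [List.range_succ] at h3
    obtain ⟨-, hba⟩ := List.append_inj h3 (by simp)
    have ha : a = c - 1 := by
      simp only [List.cons.injEq] at hba
      omega
    have hcol : a + 1 = c := by omega
    rw [hcol] at hq'
    set s := edgeF lam mu rb re i c with hsdef
    have hcnt_q : ∀ m, q.count m = ECard lam mu rb re (nu.part 1) i m c + q'.count m := by
      intro m
      rw [hqeq, List.count_append, hcount]
    have hq'le : ∀ m, q'.count m ≤ if m ∈ s then 1 else 0 := by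
      intro m
      calc q'.count m ≤ (s.sort (· ≤ ·)).count m := hq'.count_le m
        _ = _ := count_sort s m
    have hEstep : ∀ m, 1 ≤ m → ECard lam mu rb re (nu.part 1) i m (c - 1)
        = ECard lam mu rb re (nu.part 1) i m c + (if m ∈ s then 1 else 0) := by
      intro m hm
      have f1 := ECard_formula hf m i (c - 1) hm hi
      have f2 := ECard_formula hf m i c hm hi
      have hmem : m ∈ s ↔ (cI lam rb i (m - 1) - re m i < (c : ℤ)
          ∧ (c : ℤ) ≤ cI lam rb i (m - 1)) := by
        rw [hsdef, edgeF_spec hf i hm]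
      have hhi : cI lam rb i (m - 1) ≤ ((nu.part 1 : ℕ) : ℤ) := by
        refine le_trans (cI_le_nu hf i (m - 1) hi) ?_
        exact_mod_cast part_anti nu le_rfl hi
      have hlam : (0 : ℤ) ≤ (lam.part (i + 1) : ℤ) := by positivity
      have hlo := edge_lo_nonneg hf i m hi hm
      by_cases hms : m ∈ s
      · rw [if_pos hms]
        rw [hmem] at hms
        omega
      · rw [if_neg hms]
        rw [hmem] at hms
        push_neg at hms
        omega
    by_cases hzero : q'.count (k + 1) = 0
    · refine ⟨c, ?_, ?_⟩
      · rw [hcnt_q, hzero]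
        omega
      · rw [hcnt_q]
        omega
    · have hk1q : (k + 1) ∈ q' := by
        by_contra hcon
        exact hzero (List.count_eq_zero.mpr hcon)
      have hk1s : (k + 1) ∈ s := by
        rw [← Finset.mem_sort (α := ℕ) (· ≤ ·)]
        exact hq'.sublist.subset hk1q
      have hq'k1 : q'.count (k + 1) = 1 := by
        have := hq'le (k + 1)
        rw [if_pos hk1s] at this
        omega
      have hkind : (if k ∈ s then 1 else 0) ≤ q'.count k := by
        by_cases hks : k ∈ s
        · rw [if_pos hks]
          have hkq' : k ∈ q' := sorted_prefix_mem s hq' (by omega) hk1q hks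
          have := List.count_pos_iff.mpr hkq'
          omega
        · rw [if_neg hks]
          omega
      refine ⟨c - 1, ?_, ?_⟩
      · rw [hcnt_q, hEstep (k + 1) (by omega), if_pos hk1s, hq'k1]
      · rw [hcnt_q, hEstep k hk]
        omega

end counting

section lattice
variable (hf : Facts lam mu nu rb re)
include hf

lemma lattice_lemma (T : EdgeTableau lam mu nu)
    (hwr : T.wr = (List.range nu.len).flatMap fun i0 =>
      rowB lam mu nu rb (i0 + 1) ++ rowE lam mu nu rb re (i0 + 1)) :
    IsLatticeWord T.wr := by
  intro k hk t
  have hp : T.wr.take t <+: (List.range nu.len).flatMap (fun i0 =>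
      rowB lam mu nu rb (i0 + 1) ++ rowE lam mu nu rb re (i0 + 1)) := by
    rw [← hwr]
    exact List.take_prefix _ _
  set p := T.wr.take t with hpdef
  obtain ⟨l₁, l₂, hl, hcase⟩ := prefix_flatMap _ _ p hp
  have hlen : l₁.length + l₂.length = nu.len := by
    have := congrArg List.length hl
    simp at this
    omega
  have hl₁ : l₁ = List.range l₁.length := by
    have h1 : l₁ = (List.range nu.len).take l₁.length := by rw [hl, List.take_left]
    conv_lhs => rw [h1, List.take_range]
    congr 1
    omega
  have hcnt : ∀ m, 1 ≤ m → (l₁.flatMap fun i0 =>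
      rowB lam mu nu rb (i0 + 1) ++ rowE lam mu nu rb re (i0 + 1)).count m
      = SN rb re m l₁.length := by
    intro m hm
    rw [List.count_flatMap]
    conv_lhs => rw [hl₁]
    rw [sum_map_range, SN]
    refine Finset.sum_congr rfl fun i0 _ => ?_
    simp only [Function.comp]
    rw [List.count_append, count_rowB hf m (i0 + 1) hm (by omega),
      count_rowE hf m (i0 + 1) hm (by omega)]
  rcases hcase with ⟨h2, hpeq⟩ | ⟨a, tl, q, h2, hq, hpeq⟩
  · rw [hpeq, hcnt (k + 1) (by omega), hcnt k hk]
    exact SN_le hf k hk _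
  · have hlt : l₁.length < nu.len := by
      rw [h2] at hlen
      simp at hlen
      omega
    have ha : a = l₁.length := by
      have e2 : List.take (l₁.length + 1) (List.range nu.len)
          = List.take (l₁.length + 1) (l₁ ++ a :: tl) := by
        rw [← h2, ← hl]
      rw [List.take_range, min_eq_left (by omega)] at e2
      have e3 : List.take (l₁.length + 1) (l₁ ++ a :: tl) = l₁ ++ [a] := by
        rw [List.take_append, List.take_of_length_le (by omega),
          show l₁.length + 1 - l₁.length = 1 by omega]
        rfl
      rw [e3, List.range_succ, ← hl₁] at e2
      have e4 := List.append_cancel_left e2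
      simp only [List.cons.injEq] at e4
      omega
    rw [ha] at hq
    have hpc : ∀ m, 1 ≤ m → p.count m = SN rb re m l₁.length + q.count m := by
      intro m hm
      rw [hpeq, List.count_append, hcnt m hm]
    rcases prefix_append_cases hq with hqB | ⟨q', hq'eq, hq'⟩
    · have h1 : q.count (k + 1) ≤ (rb (k + 1) (l₁.length + 1)).toNat := by
        calc q.count (k + 1) ≤ (rowB lam mu nu rb (l₁.length + 1)).count (k + 1) :=
              hqB.count_le _
          _ = _ := count_rowB hf (k + 1) (l₁.length + 1) (by omega) (by omega)
      have h2' := hFnat hf k (l₁.length + 1) hk (by omega) (by omega)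
      simp only [Nat.add_sub_cancel] at h2'
      rw [hpc (k + 1) (by omega), hpc k hk]
      omega
    · have hcq : ∀ m, 1 ≤ m → q.count m = (rb m (l₁.length + 1)).toNat + q'.count m := by
        intro m hm
        rw [hq'eq, List.count_append, count_rowB hf m (l₁.length + 1) hm (by omega)]
      obtain ⟨J, hJ1, hJ2⟩ := prefix_rowE_counts hf (l₁.length + 1) k hk (by omega) hq'
      have hkey := ECard_key hf k (l₁.length + 1) J hk (by omega) (by omega)
      simp only [Nat.add_sub_cancel] at hkey
      rw [hpc (k + 1) (by omega), hpc k hk, hcq (k + 1) (by omega), hcq k hk]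
      omega

end lattice

end ARY

open Finset in
/-- **Claim 3.2 (the explicit tableau `T⋆`).** Given integers `(r_k^i, r_k^{i+1/2})`
satisfying (A)–(F) for `(λ,μ,ν)`, there is a well-defined edge-labeled tableau
`T⋆` of shape `ν/λ` and content `μ` whose boxes in row `i` in columns
`λ_i + Σ_{k'<k} r_{k'}^i + 1, …, λ_i + Σ_{k'≤k} r_{k'}^i` carry the label `k`,
whose edge labels `k` in row `i+1/2` occupy precisely the columns
`λ_i + Σ_{k'<k} r_{k'}^i − r_k^{i+1/2} + 1, …, λ_i + Σ_{k'<k} r_{k'}^i`,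
and whose row reading word `w_r(T⋆)` is lattice. -/
theorem claim_3_2 (lam mu nu : SeqPartition) (rb re : ℕ → ℕ → ℤ)
    (h : SatisfiesAF lam mu nu (fun k i => (rb k i : ℝ)) (fun k i => (re k i : ℝ))) :
    ∃ T : EdgeTableau lam mu nu,
      (∀ i k j : ℕ, 1 ≤ i → 1 ≤ k →
        ((lam.part i : ℤ) + ∑ k' ∈ Ico 1 k, rb k' i < (j : ℤ) ∧
          (j : ℤ) ≤ (lam.part i : ℤ) + ∑ k' ∈ Icc 1 k, rb k' i) →
        T.box i j = k) ∧
      (∀ i k j : ℕ, 1 ≤ i → 1 ≤ k →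
        (k ∈ T.edge i j ↔
          ((lam.part i : ℤ) + ∑ k' ∈ Ico 1 k, rb k' i) - re k i < (j : ℤ) ∧
            (j : ℤ) ≤ (lam.part i : ℤ) + ∑ k' ∈ Ico 1 k, rb k' i)) ∧
      IsLatticeWord T.wr := by
  have hf : ARY.Facts lam mu nu rb re := ARY.facts_of h
  have hIco : ∀ k : ℕ, 1 ≤ k → Finset.Ico 1 k = Finset.Icc 1 (k - 1) := by
    intro k hk
    rw [← Finset.Ico_add_one_right_eq_Icc]
    congr 1
    omega
  refine ⟨{ subset := ARY.subset_lemma hf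
            box := ARY.boxF lam mu nu rb
            edge := ARY.edgeF lam mu rb re
            box_pos := fun i j hb => ARY.boxF_pos hb
            box_eq_zero := fun i j hb => by rw [ARY.boxF, if_neg hb]
            edge_pos := fun i j e he => (Finset.mem_Icc.mp (Finset.mem_filter.mp he).1).1
            edge_eq_empty := fun i j hne => ARY.edgeF_eq_empty hf hne
            row_weak := fun i j h1 h2 => ARY.row_weak_lemma i j h1 h2
            col_strict := fun i j h1 h2 => ARY.col_strict_lemma hf i j h1 h2
            edge_gt_box := fun i j hb e he => ARY.edge_gt_lemma hf i j hb he
            edge_lt_box := fun i j hb e he => ARY.edge_lt_lemma hf i j hb he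
            not_too_high := fun i j e he => (ARY.edge_mem_facts hf he).2.2.2.2.1
            content := fun k hk => ARY.content_lemma hf k hk }, ?_, ?_, ?_⟩
  · intro i k j hi hk hcond
    obtain ⟨h1, h2⟩ := hcond
    rw [hIco k hk] at h1
    exact ((ARY.boxF_spec hf hi hk).mpr ⟨h1, h2⟩).2
  · intro i k j hi hk
    have hcI : ARY.cI lam rb i (k - 1)
        = (lam.part i : ℤ) + ∑ k' ∈ Finset.Ico 1 k, rb k' i := by
      rw [ARY.cI, hIco k hk]
    show k ∈ ARY.edgeF lam mu rb re i j ↔ _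
    rw [ARY.edgeF_spec hf i hk, hcI]
  · refine ARY.lattice_lemma hf _ ?_
    rfl
end
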